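/- arXiv:1904.05540 — 9 statements merged into one kernel-verified Lean document; each statement's English description precedes it below -/
import Mathlib

section
/- Let β, γ : Fin n → ℝ be vectors with all entries in [0,1]. There exists an n×n doubly substochastic matrix D with β = Dγ if and only if, for every k ≤ n, the sum of the k largest entries of β is at most the sum of the k largest entries of γ (equivalently, ∑_{i<k} β↓(i) ≤ ∑_{i<k} γ↓(i) for all k, where β↓ denotes the entries of β rearranged in decreasing order). -/
/-- A square real matrix is doubly substochastic if all entries are nonnegative and
every row sum and every column sum is at most 1. -/
def DoublySubstochastic {m : Type*} [Fintype m] (D : Matrix m m ℝ) : Prop :=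
  (∀ i j, 0 ≤ D i j) ∧ (∀ i, ∑ j, D i j ≤ 1) ∧ (∀ j, ∑ i, D i j ≤ 1)

/-- The sum of the `k` largest values of `β` (equivalently, `∑_{i<k} β↓(i)`):
the supremum of the sums of `β` over sets of at most `k` elements. -/
noncomputable def sumKLargest {Y : Type*} (β : Y → ℝ) (k : ℕ) : ℝ :=
  sSup {s : ℝ | ∃ S : Finset Y, S.card ≤ k ∧ s = ∑ y ∈ S, β y}

open Finset

set_option linter.unusedSectionVars false
section API
variable {Y : Type*} [Fintype Y] [DecidableEq Y]

lemma sumK_set_eq (f : Y → ℝ) (k : ℕ) :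
    {s : ℝ | ∃ S : Finset Y, S.card ≤ k ∧ s = ∑ y ∈ S, f y} =
      ↑(((univ : Finset Y).powerset.filter (fun S => S.card ≤ k)).image
        (fun S => ∑ y ∈ S, f y)) := by
  ext s
  simp [eq_comm, and_comm]

lemma sumK_bddAbove (f : Y → ℝ) (k : ℕ) :
    BddAbove {s : ℝ | ∃ S : Finset Y, S.card ≤ k ∧ s = ∑ y ∈ S, f y} := by
  rw [sumK_set_eq]
  exact (Finset.image _ _).finite_toSet.bddAbove

lemma le_sumKLargest (f : Y → ℝ) {k : ℕ} {S : Finset Y} (hS : S.card ≤ k) :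
    ∑ y ∈ S, f y ≤ sumKLargest f k :=
  le_csSup (sumK_bddAbove f k) ⟨S, hS, rfl⟩

lemma sumKLargest_le {f : Y → ℝ} {k : ℕ} {c : ℝ}
    (h : ∀ S : Finset Y, S.card ≤ k → ∑ y ∈ S, f y ≤ c) :
    sumKLargest f k ≤ c :=
  csSup_le ⟨0, ∅, by simp⟩ (by rintro s ⟨S, hS, rfl⟩; exact h S hS)

lemma sumKLargest_perm (f : Y → ℝ) (σ : Equiv.Perm Y) (k : ℕ) :
    sumKLargest (f ∘ σ) k = sumKLargest f k := by
  apply le_antisymm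
  · apply sumKLargest_le
    intro S hS
    have : ∑ y ∈ S, (f ∘ σ) y = ∑ y ∈ S.image σ, f y := by
      rw [Finset.sum_image (fun a _ b _ h => σ.injective h)]
      rfl
    rw [this]
    exact le_sumKLargest f (le_trans (Finset.card_image_le) hS)
  · apply sumKLargest_le
    intro S hS
    have : ∑ y ∈ S, f y = ∑ y ∈ S.image σ.symm, (f ∘ σ) y := by
      rw [Finset.sum_image (fun a _ b _ h => σ.symm.injective h)]
      simp
    rw [this]
    exact le_sumKLargest (f ∘ σ) (le_trans (Finset.card_image_le) hS)
-- topset existence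
lemma exists_topset (γ : Y → ℝ) {k : ℕ} (hk : k ≤ Fintype.card Y) :
    ∃ T : Finset Y, T.card = k ∧ ∀ i ∈ T, ∀ j ∉ T, γ j ≤ γ i := by
  induction k with
  | zero => exact ⟨∅, rfl, by simp⟩
  | succ k ih =>
    obtain ⟨T, hTc, hTtop⟩ := ih (le_trans (Nat.le_succ k) hk)
    have hne : Tᶜ.Nonempty := by
      rw [← Finset.card_pos, Finset.card_compl, hTc]
      omega
    obtain ⟨j, hjmem, hjmax⟩ := Finset.exists_max_image Tᶜ γ hne
    refine ⟨insert j T, ?_, ?_⟩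
    · rw [Finset.card_insert_of_notMem (Finset.mem_compl.mp hjmem), hTc]
    · intro i hi j' hj'
      have hj'T : j' ∉ T := fun h => hj' (Finset.mem_insert_of_mem h)
      rcases Finset.mem_insert.mp hi with rfl | hiT
      · exact hjmax j' (Finset.mem_compl.mpr hj'T)
      · exact hTtop i hiT j' hj'T

-- topset dominates any set of ≤ card, for nonneg weights
lemma sum_le_topset (γ : Y → ℝ) (hγ : ∀ i, 0 ≤ γ i) {T S : Finset Y}
    (htop : ∀ i ∈ T, ∀ j ∉ T, γ j ≤ γ i) (hcard : S.card ≤ T.card) :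
    ∑ y ∈ S, γ y ≤ ∑ y ∈ T, γ y := by
  have h1 : ∑ y ∈ S, γ y = ∑ y ∈ S ∩ T, γ y + ∑ y ∈ S \ T, γ y :=
    (Finset.sum_inter_add_sum_sdiff S T γ).symm
  have h2 : ∑ y ∈ T, γ y = ∑ y ∈ T ∩ S, γ y + ∑ y ∈ T \ S, γ y :=
    (Finset.sum_inter_add_sum_sdiff T S γ).symm
  rw [h1, h2, Finset.inter_comm S T]
  gcongr ?_ + ?_
  · rfl
  -- ∑_{S\T} γ ≤ ∑_{T\S} γ
  have hcard2 : (S \ T).card ≤ (T \ S).card := by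
    have := Finset.card_inter_add_card_sdiff S T
    have := Finset.card_inter_add_card_sdiff T S
    rw [Finset.inter_comm T S] at this
    omega
  rcases Finset.eq_empty_or_nonempty (S \ T) with he | hne
  · simp [he, Finset.sum_nonneg (fun i _ => hγ i)]
  have hTSne : (T \ S).Nonempty := by
    rw [← Finset.card_pos] at hne ⊢; omega
  set t := (T \ S).inf' hTSne γ with ht
  have h3 : ∀ j ∈ S \ T, γ j ≤ t := by
    intro j hj
    apply Finset.le_inf'
    intro i hi
    exact htop i (Finset.mem_sdiff.mp hi).1 j (Finset.mem_sdiff.mp hj).2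
  have h4 : ∀ i ∈ T \ S, t ≤ γ i := fun i hi => Finset.inf'_le γ hi
  have h5 : 0 ≤ t := by
    obtain ⟨i, hi, hit⟩ := Finset.exists_mem_eq_inf' hTSne γ
    rw [ht, hit]; exact hγ i
  calc ∑ y ∈ S \ T, γ y ≤ ∑ _y ∈ S \ T, t := Finset.sum_le_sum h3
    _ = (S \ T).card * t := by rw [Finset.sum_const, nsmul_eq_mul]
    _ ≤ (T \ S).card * t := by
        apply mul_le_mul_of_nonneg_right _ h5
        exact_mod_cast hcard2
    _ = ∑ _y ∈ T \ S, t := by rw [Finset.sum_const, nsmul_eq_mul]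
    _ ≤ ∑ y ∈ T \ S, γ y := Finset.sum_le_sum h4

lemma sumKLargest_eq_topset (γ : Y → ℝ) (hγ : ∀ i, 0 ≤ γ i) {k : ℕ} {T : Finset Y}
    (hTc : T.card = k) (htop : ∀ i ∈ T, ∀ j ∉ T, γ j ≤ γ i) :
    sumKLargest γ k = ∑ y ∈ T, γ y := by
  apply le_antisymm
  · exact sumKLargest_le (fun S hS => sum_le_topset γ hγ htop (hTc ▸ hS))
  · exact le_sumKLargest γ hTc.le

-- weighted sum bound
lemma weighted_le_sumKLargest (γ c : Y → ℝ) (hγ : ∀ i, 0 ≤ γ i)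
    (hc0 : ∀ j, 0 ≤ c j) (hc1 : ∀ j, c j ≤ 1) {k : ℕ} (hk : k ≤ Fintype.card Y)
    (hsum : ∑ j, c j ≤ (k : ℝ)) :
    ∑ j, c j * γ j ≤ sumKLargest γ k := by
  obtain ⟨T, hTc, htop⟩ := exists_topset γ hk
  rw [sumKLargest_eq_topset γ hγ hTc htop]
  rcases Nat.eq_zero_or_pos k with rfl | hkpos
  · have hc : ∀ j, c j = 0 := by
      intro j
      have h1 : c j ≤ ∑ j, c j := Finset.single_le_sum (fun i _ => hc0 i) (Finset.mem_univ j)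
      have := le_trans h1 hsum
      exact le_antisymm (by exact_mod_cast this) (hc0 j)
    simp [hc]
    exact Finset.sum_nonneg (fun i _ => hγ i)
  have hTne : T.Nonempty := by rw [← Finset.card_pos, hTc]; exact hkpos
  set t := T.inf' hTne γ with ht
  have h3 : ∀ j ∉ T, γ j ≤ t := fun j hj => Finset.le_inf' hTne γ (fun i hi => htop i hi j hj)
  have h4 : ∀ i ∈ T, t ≤ γ i := fun i hi => Finset.inf'_le γ hi
  have h5 : 0 ≤ t := Finset.le_inf' hTne γ (fun i _ => hγ i)
  have split : ∑ j, c j * γ j = ∑ j ∈ T, c j * γ j + ∑ j ∈ Tᶜ, c j * γ j :=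
    (Finset.sum_add_sum_compl T _).symm
  have hcompl : ∑ j ∈ Tᶜ, c j * γ j ≤ t * ∑ j ∈ Tᶜ, c j := by
    rw [Finset.mul_sum]
    apply Finset.sum_le_sum
    intro j hj
    rw [mul_comm t (c j)]
    exact mul_le_mul_of_nonneg_left (h3 j (Finset.mem_compl.mp hj)) (hc0 j)
  have hcsum : ∑ j ∈ Tᶜ, c j ≤ ∑ i ∈ T, (1 - c i) := by
    have e1 : ∑ j ∈ Tᶜ, c j = ∑ j, c j - ∑ j ∈ T, c j := by
      rw [← Finset.sum_add_sum_compl T c]; ring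
    have e2 : ∑ i ∈ T, (1 - c i) = (k : ℝ) - ∑ i ∈ T, c i := by
      rw [Finset.sum_sub_distrib, Finset.sum_const, hTc, nsmul_eq_mul, mul_one]
    rw [e1, e2]
    linarith
  have hfin : t * ∑ i ∈ T, (1 - c i) ≤ ∑ i ∈ T, (1 - c i) * γ i := by
    rw [Finset.mul_sum]
    apply Finset.sum_le_sum
    intro i hi
    rw [mul_comm t (1 - c i)]
    exact mul_le_mul_of_nonneg_left (h4 i hi) (by linarith [hc1 i])
  calc ∑ j, c j * γ j = ∑ j ∈ T, c j * γ j + ∑ j ∈ Tᶜ, c j * γ j := split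
    _ ≤ ∑ j ∈ T, c j * γ j + t * ∑ j ∈ Tᶜ, c j := by linarith
    _ ≤ ∑ j ∈ T, c j * γ j + t * ∑ i ∈ T, (1 - c i) :=
        by have := mul_le_mul_of_nonneg_left hcsum h5; linarith
    _ ≤ ∑ j ∈ T, c j * γ j + ∑ i ∈ T, (1 - c i) * γ i := by linarith
    _ = ∑ j ∈ T, γ j := by rw [← Finset.sum_add_distrib]; congr 1; ext i; ring
end API

section Matrices

lemma doublySubstochastic_one {m : Type*} [Fintype m] [DecidableEq m] :
    DoublySubstochastic (1 : Matrix m m ℝ) := by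
  refine ⟨fun i j => ?_, fun i => ?_, fun j => ?_⟩
  · by_cases h : i = j <;> simp [Matrix.one_apply, h]
  · simp [Matrix.one_apply]
  · simp [Matrix.one_apply]

lemma doublySubstochastic_mul {m : Type*} [Fintype m] {A B : Matrix m m ℝ}
    (hA : DoublySubstochastic A) (hB : DoublySubstochastic B) :
    DoublySubstochastic (A * B) := by
  obtain ⟨hA0, hAr, hAc⟩ := hA
  obtain ⟨hB0, hBr, hBc⟩ := hB
  refine ⟨fun i j => ?_, fun i => ?_, fun j => ?_⟩
  · exact Finset.sum_nonneg (fun l _ => mul_nonneg (hA0 i l) (hB0 l j))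
  · calc ∑ j, (A * B) i j = ∑ l, A i l * ∑ j, B l j := by
          simp only [Matrix.mul_apply, Finset.mul_sum]
          rw [Finset.sum_comm]
      _ ≤ ∑ l, A i l * 1 :=
          Finset.sum_le_sum (fun l _ => mul_le_mul_of_nonneg_left (hBr l) (hA0 i l))
      _ ≤ 1 := by simpa using hAr i
  · calc ∑ i, (A * B) i j = ∑ l, (∑ i, A i l) * B l j := by
          simp only [Matrix.mul_apply, Finset.sum_mul]
          rw [Finset.sum_comm]
      _ ≤ ∑ l, 1 * B l j :=
          Finset.sum_le_sum (fun l _ => mul_le_mul_of_nonneg_right (hAc l) (hB0 l j))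
      _ ≤ 1 := by simpa using hBc j

end Matrices

-- forward direction
lemma forward_dir {n : ℕ} (β γ : Fin n → ℝ) (hγ0 : ∀ i, 0 ≤ γ i)
    (D : Matrix (Fin n) (Fin n) ℝ) (hD : DoublySubstochastic D)
    (hDγ : D.mulVec γ = β) {k : ℕ} (hk : k ≤ n) :
    sumKLargest β k ≤ sumKLargest γ k := by
  obtain ⟨hD0, hDr, hDc⟩ := hD
  apply sumKLargest_le
  intro S hS
  have key : ∑ i ∈ S, β i = ∑ j, (∑ i ∈ S, D i j) * γ j := by
    rw [← hDγ]
    simp only [Matrix.mulVec, dotProduct, Finset.sum_mul]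
    rw [Finset.sum_comm]
  rw [key]
  apply weighted_le_sumKLargest γ _ hγ0
  · intro j; exact Finset.sum_nonneg (fun i _ => hD0 i j)
  · intro j
    calc ∑ i ∈ S, D i j ≤ ∑ i, D i j :=
          Finset.sum_le_sum_of_subset_of_nonneg (Finset.subset_univ S)
            (fun i _ _ => hD0 i j)
      _ ≤ 1 := hDc j
  · simpa using hk
  · calc ∑ j, ∑ i ∈ S, D i j = ∑ i ∈ S, ∑ j, D i j := Finset.sum_comm
      _ ≤ ∑ _i ∈ S, (1:ℝ) := Finset.sum_le_sum (fun i _ => hDr i)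
      _ = S.card := by simp
      _ ≤ (k : ℝ) := by exact_mod_cast hS
section Prefix
variable {n : ℕ}

/-- prefix sum over indices `< k`. -/
noncomputable def Pre (f : Fin n → ℝ) (k : ℕ) : ℝ :=
  ∑ i ∈ Finset.univ.filter (fun i : Fin n => (i : ℕ) < k), f i

lemma Pre_congr {f g : Fin n → ℝ} (k : ℕ) (h : ∀ i : Fin n, (i : ℕ) < k → f i = g i) :
    Pre f k = Pre g k :=
  Finset.sum_congr rfl (fun i hi => h i (Finset.mem_filter.mp hi).2)

lemma Pre_of_ge (f : Fin n → ℝ) {k : ℕ} (hk : n ≤ k) : Pre f k = ∑ i, f i := by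
  unfold Pre
  congr 1
  apply Finset.filter_true_of_mem
  intro i _
  exact lt_of_lt_of_le i.isLt hk

lemma filter_le_eq_insert (j : Fin n) :
    Finset.univ.filter (fun i : Fin n => (i : ℕ) ≤ (j : ℕ)) =
      insert j (Finset.univ.filter (fun i : Fin n => (i : ℕ) < (j : ℕ))) := by
  ext i
  simp only [Finset.mem_filter, Finset.mem_univ, true_and, Finset.mem_insert]
  constructor
  · intro h
    rcases eq_or_lt_of_le h with h' | h'
    · left; exact Fin.ext h'
    · right; exact h'
  · rintro (rfl | h)
    · exact le_refl _
    · exact le_of_lt h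

lemma Pre_succ (f : Fin n → ℝ) (j : Fin n) : Pre f ((j : ℕ) + 1) = Pre f (j : ℕ) + f j := by
  unfold Pre
  have h1 : Finset.univ.filter (fun i : Fin n => (i : ℕ) < (j : ℕ) + 1) =
      Finset.univ.filter (fun i : Fin n => (i : ℕ) ≤ (j : ℕ)) := by
    apply Finset.filter_congr
    intro i _
    simp [Nat.lt_succ_iff]
  rw [h1, filter_le_eq_insert j, Finset.sum_insert (by simp)]
  ring

lemma Pre_sub (f g : Fin n → ℝ) (k : ℕ) : Pre (fun i => f i - g i) k = Pre f k - Pre g k :=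
  Finset.sum_sub_distrib f g

/-- Key prefix inequality. -/
lemma prefix_key (d : Fin n → ℝ) (j : Fin n) {k : ℕ} (hjk : (j : ℕ) < k)
    (hmid : ∀ i : Fin n, (j : ℕ) < (i : ℕ) → (i : ℕ) < k → d i = 0)
    (hpre : 0 ≤ Pre d (j : ℕ)) : d j ≤ Pre d k := by
  unfold Pre
  rw [← Finset.sum_filter_add_sum_filter_not
    (Finset.univ.filter (fun i : Fin n => (i : ℕ) < k)) (fun i => (i : ℕ) ≤ (j : ℕ)) d]
  have h2 : ∑ i ∈ (Finset.univ.filter (fun i : Fin n => (i : ℕ) < k)).filter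
      (fun i : Fin n => ¬ (i : ℕ) ≤ (j : ℕ)), d i = 0 := by
    apply Finset.sum_eq_zero
    intro i hi
    simp only [Finset.mem_filter, Finset.mem_univ, true_and, not_le] at hi
    exact hmid i hi.2 hi.1
  have h1 : (Finset.univ.filter (fun i : Fin n => (i : ℕ) < k)).filter
      (fun i : Fin n => (i : ℕ) ≤ (j : ℕ)) =
      Finset.univ.filter (fun i : Fin n => (i : ℕ) ≤ (j : ℕ)) := by
    rw [Finset.filter_filter]
    apply Finset.filter_congr
    intro i _
    constructor
    · exact fun h => h.2
    · exact fun h => ⟨lt_of_le_of_lt h hjk, h⟩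
  rw [h1, h2, filter_le_eq_insert j, Finset.sum_insert (by simp), add_zero]
  have : 0 ≤ Pre d (j : ℕ) := hpre
  unfold Pre at this
  linarith

end Prefix
section Steps
variable {n : ℕ}

lemma decrease_step (β γ : Fin n → ℝ) (hβa : Antitone β) (hγa : Antitone γ)
    (hβ0 : ∀ i, 0 ≤ β i) (hpre : ∀ k, Pre β k ≤ Pre γ k)
    (j : Fin n) (hj : β j < γ j) (hafter : ∀ i, j < i → β i = γ i) :
    ∃ (γ' : Fin n → ℝ) (T : Matrix (Fin n) (Fin n) ℝ),
      DoublySubstochastic T ∧ T.mulVec γ = γ' ∧ Antitone γ' ∧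
      (∀ k, Pre β k ≤ Pre γ' k) ∧
      Finset.univ.filter (fun i => β i ≠ γ' i) ⊂ Finset.univ.filter (fun i => β i ≠ γ i) := by
  classical
  have hγj0 : 0 < γ j := lt_of_le_of_lt (hβ0 j) hj
  set γ' := Function.update γ j (β j) with hγ'
  set E : Matrix (Fin n) (Fin n) ℝ :=
    Matrix.diagonal (fun i => if i = j then β j / γ j else 1) with hE
  have hdiag0 : ∀ i : Fin n, 0 ≤ (if i = j then β j / γ j else 1 : ℝ) := by
    intro i
    by_cases h : i = j
    · simp only [h, if_pos rfl]
      exact div_nonneg (hβ0 j) hγj0.le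
    · simp [h]
  have hdiag1 : ∀ i : Fin n, (if i = j then β j / γ j else 1 : ℝ) ≤ 1 := by
    intro i
    by_cases h : i = j
    · simp [h]; rw [div_le_one hγj0]; exact hj.le
    · simp [h]
  refine ⟨γ', E, ⟨?_, ?_, ?_⟩, ?_, ?_, ?_, ?_⟩
  · intro a b
    rw [hE, Matrix.diagonal_apply]
    by_cases h : a = b
    · simp only [h, if_pos rfl]; exact hdiag0 b
    · simp [h]
  · intro a
    rw [hE]
    have : ∀ b, Matrix.diagonal (fun i => if i = j then β j / γ j else 1 : Fin n → ℝ) a b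
        = if b = a then (if a = j then β j / γ j else 1 : ℝ) else 0 := by
      intro b
      rw [Matrix.diagonal_apply]
      by_cases h : a = b
      · simp [h]
      · simp [h, Ne.symm h]
    rw [Finset.sum_congr rfl (fun b _ => this b), Finset.sum_ite_eq' Finset.univ a]
    simp [hdiag1 a]
  · intro b
    rw [hE]
    have : ∀ a, Matrix.diagonal (fun i => if i = j then β j / γ j else 1 : Fin n → ℝ) a b
        = if a = b then (if b = j then β j / γ j else 1 : ℝ) else 0 := by
      intro a
      rw [Matrix.diagonal_apply]
      by_cases h : a = b
      · simp [h]
      · simp [h]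
    rw [Finset.sum_congr rfl (fun a _ => this a), Finset.sum_ite_eq' Finset.univ b]
    simp [hdiag1 b]
  · funext i
    rw [hE, Matrix.mulVec_diagonal]
    by_cases h : i = j
    · subst h
      simp [hγ', div_mul_cancel₀ _ (ne_of_gt hγj0)]
    · simp [hγ', h, Function.update_of_ne h]
  · -- Antitone γ'
    intro a b hab
    by_cases hbj : b = j
    · by_cases haj : a = j
      · rw [hbj, haj]
      · have haltj : a < j := lt_of_le_of_ne (hbj ▸ hab) haj
        rw [hbj, hγ', Function.update_self, Function.update_of_ne haj]
        exact le_trans hj.le (hγa haltj.le)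
    · rw [hγ', Function.update_of_ne hbj]
      by_cases haj : a = j
      · rw [haj] at hab
        have hjb : j < b := lt_of_le_of_ne hab (fun h => hbj h.symm)
        rw [haj, Function.update_self, ← hafter b hjb]
        exact hβa hab
      · rw [Function.update_of_ne haj]
        exact hγa hab
  · -- prefix
    intro k
    by_cases hk : (j : ℕ) < k
    · have hval : Pre γ' k = Pre γ k + (β j - γ j) := by
        have h1 : Pre (fun i => γ' i - γ i) k = Pre γ' k - Pre γ k := Pre_sub γ' γ k
        have h2 : Pre (fun i => γ' i - γ i) k = β j - γ j := by
          unfold Pre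
          rw [Finset.sum_eq_single_of_mem j (by simp [hk])]
          · rw [hγ', Function.update_self]
          · intro i _ hij
            rw [hγ', Function.update_of_ne hij, sub_self]
        linarith
      have hkey : γ j - β j ≤ Pre (fun i => γ i - β i) k := by
        have := prefix_key (fun i => γ i - β i) j hk ?_ ?_
        · exact this
        · intro i hji _
          have := hafter i (by rwa [Fin.lt_def])
          simp [this]
        · rw [Pre_sub]
          linarith [hpre (j : ℕ)]
      rw [Pre_sub] at hkey
      linarith [hval]
    · have : Pre γ' k = Pre γ k := by
        apply Pre_congr
        intro i hi
        have : i ≠ j := by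
          intro h; subst h; exact hk hi
        rw [hγ', Function.update_of_ne this]
      rw [this]
      exact hpre k
  · -- card ssubset
    rw [Finset.ssubset_iff_of_subset]
    · exact ⟨j, by simp [hj.ne], by simp [hγ', Function.update_self]⟩
    · intro i hi
      simp only [Finset.mem_filter, Finset.mem_univ, true_and] at hi ⊢
      intro h
      apply hi
      by_cases hij : i = j
      · subst hij
        exact absurd (by rw [hγ', Function.update_self]) hi
      · rw [hγ', Function.update_of_ne hij]
        exact h

end Steps
section TStep
variable {n : ℕ}

lemma ttransform_step (β γ : Fin n → ℝ) (hβa : Antitone β) (hγa : Antitone γ)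
    (hpre : ∀ k, Pre β k ≤ Pre γ k)
    (j l : Fin n) (hjl : j < l) (hβj : β j < γ j) (hγl : γ l < β l)
    (hjmax : ∀ i, j < i → γ i ≤ β i) (hlmin : ∀ i, j < i → i < l → β i ≤ γ i) :
    ∃ (γ' : Fin n → ℝ) (T : Matrix (Fin n) (Fin n) ℝ),
      DoublySubstochastic T ∧ T.mulVec γ = γ' ∧ Antitone γ' ∧
      (∀ k, Pre β k ≤ Pre γ' k) ∧
      Finset.univ.filter (fun i => β i ≠ γ' i) ⊂ Finset.univ.filter (fun i => β i ≠ γ i) := by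
  classical
  have hjl' : j ≠ l := ne_of_lt hjl
  have hlj' : l ≠ j := Ne.symm hjl'
  have hβjl : β l ≤ β j := hβa hjl.le
  have hγjl : γ l < γ j := lt_of_lt_of_le hγl (le_trans hβjl hβj.le)
  set δ := min (γ j - β j) (β l - γ l) with hδdef
  have hδ0 : 0 < δ := lt_min (by linarith) (by linarith)
  have hδa : δ ≤ γ j - β j := min_le_left _ _
  have hδb : δ ≤ β l - γ l := min_le_right _ _
  have hg0 : (0:ℝ) < γ j - γ l := by linarith
  have hδg : δ ≤ γ j - γ l := by linarith
  set t := δ / (γ j - γ l) with htdef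
  have ht0 : 0 ≤ t := div_nonneg hδ0.le hg0.le
  have ht1 : t ≤ 1 := by rw [htdef, div_le_one hg0]; exact hδg
  have htg : t * (γ j - γ l) = δ := div_mul_cancel₀ δ (ne_of_gt hg0)
  set γ' : Fin n → ℝ := fun i => if i = j then γ j - δ else if i = l then γ l + δ else γ i
    with hγ'
  have hγ'j : γ' j = γ j - δ := by simp [hγ']
  have hγ'l : γ' l = γ l + δ := by simp [hγ', hlj']
  have hγ'other : ∀ i, i ≠ j → i ≠ l → γ' i = γ i := by
    intro i h1 h2; simp [hγ', h1, h2]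
  have hA : β j ≤ γ' j := by rw [hγ'j]; linarith
  have hB : γ' j ≤ γ j := by rw [hγ'j]; linarith
  have hC : γ l ≤ γ' l := by rw [hγ'l]; linarith
  have hD : γ' l ≤ β l := by rw [hγ'l]; linarith
  set T : Matrix (Fin n) (Fin n) ℝ := fun p q =>
    if p = j then (if q = j then 1 - t else if q = l then t else 0)
    else if p = l then (if q = j then t else if q = l then 1 - t else 0)
    else if p = q then 1 else 0 with hT
  have hTjj : T j j = 1 - t := by simp [hT]
  have hTjl : T j l = t := by simp [hT, hlj']
  have hTjo : ∀ q, q ≠ j → q ≠ l → T j q = 0 := by intro q h1 h2; simp [hT, h1, h2]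
  have hTlj : T l j = t := by simp [hT, hlj']
  have hTll : T l l = 1 - t := by simp [hT, hlj']
  have hTlo : ∀ q, q ≠ j → q ≠ l → T l q = 0 := by intro q h1 h2; simp [hT, h1, h2, hlj']
  have hTo : ∀ p, p ≠ j → p ≠ l → ∀ q, T p q = if p = q then 1 else 0 := by
    intro p h1 h2 q; simp [hT, h1, h2]
  have hrowj : ∀ q : Fin n, T j q = (if q = j then 1 - t else 0) + (if q = l then t else 0) := by
    intro q
    by_cases h2 : q = j
    · rw [h2, hTjj]; simp [hjl']
    · by_cases h3 : q = l
      · rw [h3, hTjl]; simp [hlj']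
      · rw [hTjo q h2 h3]; simp [h2, h3]
  have hrowl : ∀ q : Fin n, T l q = (if q = j then t else 0) + (if q = l then 1 - t else 0) := by
    intro q
    by_cases h2 : q = j
    · rw [h2, hTlj]; simp [hjl']
    · by_cases h3 : q = l
      · rw [h3, hTll]; simp [hlj']
      · rw [hTlo q h2 h3]; simp [h2, h3]
  refine ⟨γ', T, ⟨?_, ?_, ?_⟩, ?_, ?_, ?_, ?_⟩
  · -- nonneg entries
    intro p q
    by_cases h1 : p = j
    · rw [h1, hrowj q]
      by_cases h2 : q = j <;> by_cases h3 : q = l <;> simp [h2, h3, hjl', hlj'] <;> linarith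
    · by_cases h2 : p = l
      · rw [h2, hrowl q]
        by_cases h3 : q = j <;> by_cases h4 : q = l <;> simp [h3, h4, hjl', hlj'] <;> linarith
      · rw [hTo p h1 h2 q]
        by_cases h3 : p = q <;> simp [h3]
  · -- row sums
    intro p
    by_cases h1 : p = j
    · rw [h1, Finset.sum_congr rfl (fun q _ => hrowj q), Finset.sum_add_distrib,
        Finset.sum_ite_eq' Finset.univ j, Finset.sum_ite_eq' Finset.univ l]
      simp
    · by_cases h2 : p = l
      · rw [h2, Finset.sum_congr rfl (fun q _ => hrowl q), Finset.sum_add_distrib,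
          Finset.sum_ite_eq' Finset.univ j, Finset.sum_ite_eq' Finset.univ l]
        simp
      · rw [Finset.sum_congr rfl (fun q _ => hTo p h1 h2 q)]
        rw [Finset.sum_ite_eq Finset.univ p (fun _ => (1:ℝ))]
        simp
  · -- column sums
    intro q
    have hcol : ∀ p : Fin n, T p q =
        (if p = j then T j q else 0) + (if p = l then T l q else 0) +
          (if p = j ∨ p = l then 0 else T p q) := by
      intro p
      by_cases h1 : p = j
      · simp [h1, hjl']
      · by_cases h2 : p = l
        · simp [h1, h2, hlj']
        · simp [h1, h2]
    rw [Finset.sum_congr rfl (fun p _ => hcol p), Finset.sum_add_distrib,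
      Finset.sum_add_distrib, Finset.sum_ite_eq' Finset.univ j, Finset.sum_ite_eq' Finset.univ l]
    have hrest : ∑ p, (if p = j ∨ p = l then 0 else T p q) ≤
        ∑ p, (if p = q then (if q = j ∨ q = l then 0 else 1) else 0) := by
      apply Finset.sum_le_sum
      intro p _
      by_cases hp : p = j ∨ p = l
      · rw [if_pos hp]
        split_ifs <;> norm_num
      · push_neg at hp
        rw [if_neg (by tauto), hTo p hp.1 hp.2 q]
        by_cases h3 : p = q
        · rw [if_pos h3, if_pos h3,
            if_neg (by simp only [← h3, hp.1, hp.2, or_self]; tauto)]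
        · rw [if_neg h3, if_neg h3]
    have hsum2 : ∑ p : Fin n, (if p = q then (if q = j ∨ q = l then (0:ℝ) else 1) else 0)
        = (if q = j ∨ q = l then (0:ℝ) else 1) := by
      rw [Finset.sum_ite_eq' Finset.univ q]; simp
    rw [hsum2] at hrest
    simp only [Finset.mem_univ, if_pos]
    by_cases hq1 : q = j
    · rw [hq1] at hrest ⊢
      rw [hTjj, hTlj]
      rw [if_pos (Or.inl rfl)] at hrest
      linarith
    · by_cases hq2 : q = l
      · rw [hq2] at hrest ⊢
        rw [hTjl, hTll]
        rw [if_pos (Or.inr rfl)] at hrest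
        linarith
      · rw [hTjo q hq1 hq2, hTlo q hq1 hq2]
        rw [if_neg (by tauto)] at hrest
        linarith
  · -- mulVec
    funext p
    show ∑ q, T p q * γ q = γ' p
    by_cases h1 : p = j
    · have : ∀ q : Fin n, T p q * γ q =
          (if q = j then (1 - t) * γ j else 0) + (if q = l then t * γ l else 0) := by
        intro q
        rw [h1, hrowj q]
        by_cases h2 : q = j
        · rw [h2]; simp [hjl']
        · by_cases h3 : q = l
          · rw [h3]; simp [hlj']
          · simp [h2, h3]
      rw [Finset.sum_congr rfl (fun q _ => this q), Finset.sum_add_distrib,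
        Finset.sum_ite_eq' Finset.univ j, Finset.sum_ite_eq' Finset.univ l]
      simp only [Finset.mem_univ, if_pos]
      rw [h1, hγ'j]
      have e : (1 - t) * γ j + t * γ l = γ j - t * (γ j - γ l) := by ring
      rw [e, htg]
    · by_cases h2 : p = l
      · have : ∀ q : Fin n, T p q * γ q =
            (if q = j then t * γ j else 0) + (if q = l then (1 - t) * γ l else 0) := by
          intro q
          rw [h2, hrowl q]
          by_cases h3 : q = j
          · rw [h3]; simp [hjl']
          · by_cases h4 : q = l
            · rw [h4]; simp [hlj']
            · simp [h3, h4]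
        rw [Finset.sum_congr rfl (fun q _ => this q), Finset.sum_add_distrib,
          Finset.sum_ite_eq' Finset.univ j, Finset.sum_ite_eq' Finset.univ l]
        simp only [Finset.mem_univ, if_pos]
        rw [h2, hγ'l]
        have e : t * γ j + (1 - t) * γ l = γ l + t * (γ j - γ l) := by ring
        rw [e, htg]
      · have : ∀ q : Fin n, T p q * γ q = (if q = p then γ q else 0) := by
          intro q
          rw [hTo p h1 h2 q]
          by_cases h3 : p = q
          · rw [← h3]; simp
          · simp [h3, Ne.symm h3]
        rw [Finset.sum_congr rfl (fun q _ => this q), Finset.sum_ite_eq' Finset.univ p]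
        simp [hγ'other p h1 h2]
  · -- Antitone γ'
    intro p q hpq
    by_cases hqj : q = j
    · by_cases hpj : p = j
      · rw [hqj, hpj]
      · have hplt : p < j := lt_of_le_of_ne (hqj ▸ hpq) hpj
        have hpl : p ≠ l := ne_of_lt (lt_trans hplt hjl)
        rw [hqj, hγ'other p hpj hpl]
        exact le_trans hB (hγa hplt.le)
    · by_cases hql : q = l
      · by_cases hpj : p = j
        · rw [hql, hpj]
          exact le_trans hD (le_trans hβjl hA)
        · by_cases hpl : p = l
          · rw [hql, hpl]
          · rw [hql, hγ'other p hpj hpl]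
            by_cases hjp : j < p
            · have hplt : p < l := lt_of_le_of_ne (hql ▸ hpq) hpl
              calc γ' l ≤ β l := hD
                _ ≤ β p := hβa hplt.le
                _ ≤ γ p := hlmin p hjp hplt
            · have hplt : p < j := lt_of_le_of_ne (not_lt.mp hjp) hpj
              calc γ' l ≤ β l := hD
                _ ≤ β j := hβjl
                _ ≤ γ j := hβj.le
                _ ≤ γ p := hγa hplt.le
      · rw [hγ'other q hqj hql]
        by_cases hpj : p = j
        · have hjq : j < q := lt_of_le_of_ne (hpj ▸ hpq) (fun h => hqj h.symm)
          rw [hpj]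
          calc γ q ≤ β q := hjmax q hjq
            _ ≤ β j := hβa hjq.le
            _ ≤ γ' j := hA
        · by_cases hpl : p = l
          · rw [hpl]
            exact le_trans (hγa (hpl ▸ hpq)) hC
          · rw [hγ'other p hpj hpl]
            exact hγa hpq
  · -- prefix
    intro k
    by_cases hjk : (j : ℕ) < k
    · by_cases hlk : (l : ℕ) < k
      · have heq : Pre γ' k = Pre γ k := by
          have h1 : Pre (fun i => γ' i - γ i) k = Pre γ' k - Pre γ k := Pre_sub γ' γ k
          have h2 : Pre (fun i => γ' i - γ i) k = 0 := by
            unfold Pre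
            have hsub : ({j, l} : Finset (Fin n)) ⊆
                Finset.univ.filter (fun i : Fin n => (i : ℕ) < k) := by
              intro x hx
              rcases Finset.mem_insert.mp hx with rfl | hx
              · simp [hjk]
              · rw [Finset.mem_singleton] at hx
                subst hx
                simp [hlk]
            rw [← Finset.sum_subset hsub]
            · rw [Finset.sum_pair hjl', hγ'j, hγ'l]; ring
            · intro x _ hx
              simp only [Finset.mem_insert, Finset.mem_singleton, not_or] at hx
              rw [hγ'other x hx.1 hx.2, sub_self]
          linarith
        rw [heq]
        exact hpre k
      · -- j < k ≤ l
        have hval : Pre γ' k = Pre γ k - δ := by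
          have h1 : Pre (fun i => γ' i - γ i) k = Pre γ' k - Pre γ k := Pre_sub γ' γ k
          have h2 : Pre (fun i => γ' i - γ i) k = -δ := by
            unfold Pre
            rw [Finset.sum_eq_single_of_mem j (by simp [hjk])]
            · rw [hγ'j]; ring
            · intro i hi hij
              have hil : i ≠ l := by
                intro h; subst h
                exact hlk (Finset.mem_filter.mp hi).2
              rw [hγ'other i hij hil, sub_self]
          linarith
        have hkey : γ j - β j ≤ Pre (fun i => γ i - β i) k := by
          apply prefix_key (fun i => γ i - β i) j hjk
          · intro i hji hik
            have hji' : j < i := by rwa [Fin.lt_def]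
            have hil : i < l := by
              rw [Fin.lt_def]
              exact lt_of_lt_of_le hik (not_lt.mp hlk)
            have e1 := hjmax i hji'
            have e2 := hlmin i hji' hil
            show γ i - β i = 0
            linarith
          · rw [Pre_sub]
            linarith [hpre (j : ℕ)]
        rw [Pre_sub] at hkey
        linarith [hval]
    · have heq : Pre γ' k = Pre γ k := by
        apply Pre_congr
        intro i hi
        have hij : i ≠ j := fun h => hjk (h ▸ hi)
        have hil : i ≠ l := by
          intro h; subst h
          exact hjk (lt_trans (by rw [← Fin.lt_def]; exact hjl) hi)
        exact hγ'other i hij hil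
      rw [heq]
      exact hpre k
  · -- ssubset
    rw [Finset.ssubset_iff_of_subset]
    · rcases le_total (γ j - β j) (β l - γ l) with hab | hab
      · refine ⟨j, by simp [hβj.ne], ?_⟩
        simp only [Finset.mem_filter, Finset.mem_univ, true_and, not_not]
        rw [hγ'j, hδdef, min_eq_left hab]; ring
      · refine ⟨l, by simp [hγl.ne'], ?_⟩
        simp only [Finset.mem_filter, Finset.mem_univ, true_and, not_not]
        rw [hγ'l, hδdef, min_eq_right hab]; ring
    · intro i hi
      simp only [Finset.mem_filter, Finset.mem_univ, true_and] at hi ⊢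
      by_cases hij : i = j
      · subst hij; exact hβj.ne
      · by_cases hil : i = l
        · subst hil; exact hγl.ne'
        · rwa [hγ'other i hij hil] at hi

end TStep
section Core
variable {n : ℕ}

lemma core_lemma : ∀ (m : ℕ) (β γ : Fin n → ℝ), Antitone β → Antitone γ →
    (∀ i, 0 ≤ β i) → (∀ k, Pre β k ≤ Pre γ k) →
    (Finset.univ.filter (fun i => β i ≠ γ i)).card ≤ m →
    ∃ D : Matrix (Fin n) (Fin n) ℝ, DoublySubstochastic D ∧ D.mulVec γ = β := by
  intro m
  induction m with
  | zero =>
    intro β γ _ _ _ _ hcard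
    have heq : β = γ := by
      funext i
      by_contra h
      have : i ∈ Finset.univ.filter (fun i => β i ≠ γ i) := by simp [h]
      have := Finset.card_pos.mpr ⟨i, this⟩
      omega
    exact ⟨1, doublySubstochastic_one, by rw [Matrix.one_mulVec, heq]⟩
  | succ m ih =>
    intro β γ hβa hγa hβ0 hpre hcard
    by_cases heq : β = γ
    · exact ⟨1, doublySubstochastic_one, by rw [Matrix.one_mulVec, heq]⟩
    · have hdne : (Finset.univ.filter (fun i => β i ≠ γ i)).Nonempty := by
        rcases Function.ne_iff.mp heq with ⟨i, hi⟩
        exact ⟨i, by simp [hi]⟩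
      set diff := Finset.univ.filter (fun i => β i ≠ γ i) with hdiff
      set i₀ := diff.min' hdne with hi₀def
      have hi₀mem : i₀ ∈ diff := Finset.min'_mem diff hdne
      have hi₀ : β i₀ ≠ γ i₀ := (Finset.mem_filter.mp hi₀mem).2
      have hlt : ∀ i, i < i₀ → β i = γ i := by
        intro i hii₀
        by_contra h
        have : i ∈ diff := by simp [hdiff, h]
        exact absurd (Finset.min'_le diff i this) (not_le.mpr hii₀)
      have hβγi₀ : β i₀ < γ i₀ := by
        have h1 := hpre ((i₀ : ℕ) + 1)
        rw [Pre_succ β i₀, Pre_succ γ i₀] at h1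
        have h2 : Pre β (i₀ : ℕ) = Pre γ (i₀ : ℕ) :=
          Pre_congr _ (fun i hi => hlt i (by rwa [Fin.lt_def]))
        exact lt_of_le_of_ne (by linarith) hi₀
      set Splus := Finset.univ.filter (fun i => β i < γ i) with hSplus
      have hSne : Splus.Nonempty := ⟨i₀, by simp [hSplus, hβγi₀]⟩
      set j := Splus.max' hSne with hjdef
      have hjmem : j ∈ Splus := Finset.max'_mem Splus hSne
      have hβγj : β j < γ j := (Finset.mem_filter.mp hjmem).2
      have hjmax : ∀ i, j < i → γ i ≤ β i := by
        intro i hji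
        by_contra h
        have : i ∈ Splus := by simp [hSplus]; linarith
        exact absurd (Finset.le_max' Splus i this) (not_le.mpr hji)
      set L := Finset.univ.filter (fun i => j < i ∧ γ i < β i) with hL
      by_cases hLne : L.Nonempty
      · set l := L.min' hLne with hldef
        have hlmem : l ∈ L := Finset.min'_mem L hLne
        have hjl : j < l := (Finset.mem_filter.mp hlmem).2.1
        have hγl : γ l < β l := (Finset.mem_filter.mp hlmem).2.2
        have hlmin : ∀ i, j < i → i < l → β i ≤ γ i := by
          intro i h1 h2
          by_contra h
          have : i ∈ L := by simp [hL]; exact ⟨h1, by linarith⟩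
          exact absurd (Finset.min'_le L i this) (not_le.mpr h2)
        obtain ⟨γ', T, hT, hTγ, hγ'a, hpre', hss⟩ :=
          ttransform_step β γ hβa hγa hpre j l hjl hβγj hγl hjmax hlmin
        have hcard' : (Finset.univ.filter (fun i => β i ≠ γ' i)).card ≤ m := by
          have := Finset.card_lt_card hss
          rw [← hdiff] at this
          omega
        obtain ⟨D', hD', hD'γ'⟩ := ih β γ' hβa hγ'a hβ0 hpre' hcard'
        refine ⟨D' * T, doublySubstochastic_mul hD' hT, ?_⟩
        rw [← Matrix.mulVec_mulVec, hTγ, hD'γ']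
      · have hafter : ∀ i, j < i → β i = γ i := by
          intro i hji
          have h1 := hjmax i hji
          have h2 : ¬ (γ i < β i) := by
            intro h
            exact hLne ⟨i, by simp [hL]; exact ⟨hji, h⟩⟩
          linarith
        obtain ⟨γ', T, hT, hTγ, hγ'a, hpre', hss⟩ :=
          decrease_step β γ hβa hγa hβ0 hpre j hβγj hafter
        have hcard' : (Finset.univ.filter (fun i => β i ≠ γ' i)).card ≤ m := by
          have := Finset.card_lt_card hss
          rw [← hdiff] at this
          omega
        obtain ⟨D', hD', hD'γ'⟩ := ih β γ' hβa hγ'a hβ0 hpre' hcard'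
        refine ⟨D' * T, doublySubstochastic_mul hD' hT, ?_⟩
        rw [← Matrix.mulVec_mulVec, hTγ, hD'γ']

end Core
section Final
variable {n : ℕ}

lemma card_filter_lt {k : ℕ} (hk : k ≤ n) :
    (Finset.univ.filter (fun i : Fin n => (i : ℕ) < k)).card = k := by
  have : Finset.univ.filter (fun i : Fin n => (i : ℕ) < k) =
      Finset.map ⟨Fin.castLE hk, Fin.castLE_injective hk⟩ Finset.univ := by
    ext x
    simp only [Finset.mem_filter, Finset.mem_univ, true_and, Finset.mem_map,
      Function.Embedding.coeFn_mk]
    constructor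
    · intro h
      exact ⟨⟨(x : ℕ), h⟩, by ext; simp⟩
    · rintro ⟨y, rfl⟩
      exact y.isLt
  rw [this, Finset.card_map, Finset.card_univ, Fintype.card_fin]

lemma sumKLargest_eq_Pre (f : Fin n → ℝ) (hf : Antitone f) (hf0 : ∀ i, 0 ≤ f i)
    {k : ℕ} (hk : k ≤ n) : sumKLargest f k = Pre f k := by
  apply sumKLargest_eq_topset f hf0 (card_filter_lt hk)
  intro i hi j hj
  simp only [Finset.mem_filter, Finset.mem_univ, true_and, not_lt] at hi hj
  apply hf
  rw [Fin.le_def]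
  omega

theorem exists_doublySubstochastic_iff_majorized' (β γ : Fin n → ℝ)
    (hβ : ∀ i, 0 ≤ β i ∧ β i ≤ 1) (hγ : ∀ i, 0 ≤ γ i ∧ γ i ≤ 1) :
    (∃ D : Matrix (Fin n) (Fin n) ℝ, DoublySubstochastic D ∧ D.mulVec γ = β) ↔
      ∀ k ≤ n, sumKLargest β k ≤ sumKLargest γ k := by
  constructor
  · rintro ⟨D, hD, hDγ⟩ k hk
    exact forward_dir β γ (fun i => (hγ i).1) D hD hDγ hk
  · intro hmaj
    set σ := Tuple.sort (fun i => -β i) with hσ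
    set τ := Tuple.sort (fun i => -γ i) with hτ
    set β' := β ∘ σ with hβ'
    set γ' := γ ∘ τ with hγ'
    have hβ'a : Antitone β' := by
      intro p q hpq
      have := Tuple.monotone_sort (fun i => -β i) hpq
      simp only [Function.comp_apply] at this ⊢
      rw [hβ']; simp only [Function.comp_apply]
      rw [hσ]; linarith [this]
    have hγ'a : Antitone γ' := by
      intro p q hpq
      have := Tuple.monotone_sort (fun i => -γ i) hpq
      simp only [Function.comp_apply] at this ⊢
      rw [hγ']; simp only [Function.comp_apply]
      rw [hτ]; linarith [this]
    have hβ'0 : ∀ i, 0 ≤ β' i := fun i => (hβ (σ i)).1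
    have hγ'0 : ∀ i, 0 ≤ γ' i := fun i => (hγ (τ i)).1
    have hpre : ∀ k, Pre β' k ≤ Pre γ' k := by
      intro k
      rcases le_or_gt k n with hk | hk
      · rw [← sumKLargest_eq_Pre β' hβ'a hβ'0 hk, ← sumKLargest_eq_Pre γ' hγ'a hγ'0 hk]
        rw [hβ', hγ', sumKLargest_perm β σ k, sumKLargest_perm γ τ k]
        exact hmaj k hk
      · rw [Pre_of_ge β' hk.le, Pre_of_ge γ' hk.le,
          ← Pre_of_ge β' (le_refl n), ← Pre_of_ge γ' (le_refl n),
          ← sumKLargest_eq_Pre β' hβ'a hβ'0 (le_refl n),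
          ← sumKLargest_eq_Pre γ' hγ'a hγ'0 (le_refl n),
          hβ', hγ', sumKLargest_perm β σ n, sumKLargest_perm γ τ n]
        exact hmaj n (le_refl n)
    obtain ⟨D', hD', hD'γ'⟩ := core_lemma
      (Finset.univ.filter (fun i => β' i ≠ γ' i)).card β' γ' hβ'a hγ'a hβ'0 hpre (le_refl _)
    refine ⟨fun i m => D' (σ.symm i) (τ.symm m), ⟨?_, ?_, ?_⟩, ?_⟩
    · intro i m; exact hD'.1 _ _
    · intro i
      rw [Equiv.sum_comp τ.symm (fun b => D' (σ.symm i) b)]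
      exact hD'.2.1 _
    · intro m
      rw [Equiv.sum_comp σ.symm (fun b => D' b (τ.symm m))]
      exact hD'.2.2 _
    · funext i
      show ∑ m, D' (σ.symm i) (τ.symm m) * γ m = β i
      have h1 : ∑ m, D' (σ.symm i) (τ.symm m) * γ m
          = ∑ b, D' (σ.symm i) (τ.symm (τ b)) * γ (τ b) :=
        (Equiv.sum_comp τ (fun m => D' (σ.symm i) (τ.symm m) * γ m)).symm
      rw [h1]
      simp only [Equiv.symm_apply_apply]
      have h2 : ∑ b, D' (σ.symm i) b * γ (τ b) = (D'.mulVec γ') (σ.symm i) := by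
        simp [Matrix.mulVec, dotProduct, hγ']
      rw [h2, hD'γ']
      simp [hβ']

end Final

/-- For vectors `β, γ : Fin n → ℝ` with entries in `[0,1]`, there is a doubly
substochastic matrix `D` with `β = Dγ` iff for every `k ≤ n` the sum of the `k`
largest entries of `β` is at most the sum of the `k` largest entries of `γ`. -/
theorem exists_doublySubstochastic_iff_majorized {n : ℕ} (β γ : Fin n → ℝ)
    (hβ : ∀ i, 0 ≤ β i ∧ β i ≤ 1) (hγ : ∀ i, 0 ≤ γ i ∧ γ i ≤ 1) :
    (∃ D : Matrix (Fin n) (Fin n) ℝ, DoublySubstochastic D ∧ D.mulVec γ = β) ↔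
      ∀ k ≤ n, sumKLargest β k ≤ sumKLargest γ k := by
  exact exists_doublySubstochastic_iff_majorized' β γ hβ hγ
end

section
/- Let β, γ : Fin n → ℝ be vectors with all entries in [0,1]. There exists an n×n doubly substochastic matrix D with β = Dγ if and only if there exist finitely many coefficients λ_0, …, λ_{m−1} ∈ [0,1] with ∑_i λ_i ≤ 1 and n×n partial permutation matrices P_0, …, P_{m−1} such that β = ∑_i λ_i P_i γ. -/
/-- A partial permutation matrix: a 0–1 matrix with at most one 1 in each row
and in each column. -/
def IsPartialPermMatrix {m : Type*} [Fintype m] (P : Matrix m m ℝ) : Prop :=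
  (∀ i j, P i j = 0 ∨ P i j = 1) ∧ (∀ i, ∑ j, P i j ≤ 1) ∧ (∀ j, ∑ i, P i j ≤ 1)

/-!
A doubly substochastic `D` is the upper left block of the doubly stochastic matrix
`[[D, I - diag (row sums)], [I - diag (column sums), Dᵀ]]`. Birkhoff's theorem writes this
dilation as a convex combination of permutation matrices, and the upper left blocks of those
are partial permutation matrices. Conversely, a subconvex combination of partial permutation
matrices is doubly substochastic.
-/

open Finset Matrix

theorem Fintype.sum_comp_le_sum_of_injective {ι κ M : Type*} [Fintype ι] [Fintype κ]
    [AddCommMonoid M] [PartialOrder M] [IsOrderedAddMonoid M] {g : ι → κ}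
    (hg : Function.Injective g) {f : κ → M} (hf : ∀ j, 0 ≤ f j) :
    ∑ i, f (g i) ≤ ∑ j, f j := by
  simpa [Finset.sum_map] using Finset.sum_le_univ_sum_of_nonneg (s := univ.map ⟨g, hg⟩) hf

variable {m : Type*} [Fintype m]

namespace IsPartialPermMatrix

variable {P : Matrix m m ℝ}

theorem nonneg (hP : IsPartialPermMatrix P) (i j : m) : 0 ≤ P i j := by
  rcases hP.1 i j with h | h <;> simp [h]

theorem doublySubstochastic (hP : IsPartialPermMatrix P) : DoublySubstochastic P :=
  ⟨hP.nonneg, hP.2⟩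

theorem submatrix {m' : Type*} [Fintype m'] (hP : IsPartialPermMatrix P) {f g : m' → m}
    (hf : Function.Injective f) (hg : Function.Injective g) :
    IsPartialPermMatrix (P.submatrix f g) :=
  ⟨fun i j => hP.1 (f i) (g j),
    fun i => (Fintype.sum_comp_le_sum_of_injective hg (hP.nonneg (f i))).trans (hP.2.1 (f i)),
    fun j => (Fintype.sum_comp_le_sum_of_injective hf (hP.nonneg · (g j))).trans (hP.2.2 (g j))⟩

end IsPartialPermMatrix

theorem Equiv.Perm.isPartialPermMatrix_permMatrix [DecidableEq m] (σ : Equiv.Perm m) :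
    IsPartialPermMatrix (σ.permMatrix ℝ) := by
  obtain ⟨-, hrow, hcol⟩ :=
    mem_doublyStochastic_iff_sum.1 (permMatrix_mem_doublyStochastic (R := ℝ) (σ := σ))
  refine ⟨fun i j => ?_, fun i => (hrow i).le, fun j => (hcol j).le⟩
  simp only [Equiv.Perm.permMatrix, PEquiv.toMatrix_apply]
  split_ifs <;> simp

namespace DoublySubstochastic

theorem sum_smul {ι : Type*} [Fintype ι] {lam : ι → ℝ} {D : ι → Matrix m m ℝ}
    (hlam : ∀ k, 0 ≤ lam k) (hsum : ∑ k, lam k ≤ 1) (hD : ∀ k, DoublySubstochastic (D k)) :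
    DoublySubstochastic (∑ k, lam k • D k) := by
  have bound : ∀ s : ι → ℝ, (∀ k, s k ≤ 1) → ∑ k, lam k * s k ≤ 1 := fun s hs =>
    calc ∑ k, lam k * s k ≤ ∑ k, lam k * 1 :=
          sum_le_sum fun k _ => mul_le_mul_of_nonneg_left (hs k) (hlam k)
      _ ≤ 1 := by simpa using hsum
  simp only [DoublySubstochastic, Matrix.sum_apply, Matrix.smul_apply, smul_eq_mul]
  refine ⟨fun i j => sum_nonneg fun k _ => mul_nonneg (hlam k) ((hD k).1 i j), fun i => ?_,
    fun j => ?_⟩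
  · rw [sum_comm]
    simpa only [mul_sum] using bound _ fun k => (hD k).2.1 i
  · rw [sum_comm]
    simpa only [mul_sum] using bound _ fun k => (hD k).2.2 j

variable [DecidableEq m] {D : Matrix m m ℝ}

theorem fromBlocks_mem_doublyStochastic (hD : DoublySubstochastic D) :
    fromBlocks D (diagonal fun i => 1 - ∑ j, D i j) (diagonal fun j => 1 - ∑ i, D i j) Dᵀ ∈
      doublyStochastic ℝ (m ⊕ m) := by
  obtain ⟨hpos, hrow, hcol⟩ := hD
  rw [mem_doublyStochastic_iff_sum]
  refine ⟨?_, ?_, ?_⟩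
  · rintro (i | i) (j | j) <;>
      simp [diagonal_apply, hpos, apply_ite, hrow, hcol]
  all_goals rintro (i | i) <;> simp [Fintype.sum_sum_type, diagonal_apply]

theorem exists_eq_sum_submatrix_permMatrix (hD : DoublySubstochastic D) :
    ∃ w : Equiv.Perm (m ⊕ m) → ℝ, (∀ σ, 0 ≤ w σ) ∧ ∑ σ, w σ = 1 ∧
      ∑ σ, w σ • (σ.permMatrix ℝ).submatrix Sum.inl Sum.inl = D := by
  obtain ⟨w, hw0, hw1, hw⟩ :=
    exists_eq_sum_perm_of_mem_doublyStochastic hD.fromBlocks_mem_doublyStochastic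
  refine ⟨w, hw0, hw1, ?_⟩
  ext i j
  simpa [Matrix.sum_apply] using congr_fun₂ hw (Sum.inl i) (Sum.inl j)

end DoublySubstochastic

theorem exists_doublySubstochastic_iff_subconvex_partialPerms_general {n : ℕ} (β γ : Fin n → ℝ) :
    (∃ D : Matrix (Fin n) (Fin n) ℝ, DoublySubstochastic D ∧ D.mulVec γ = β) ↔
      ∃ (m : ℕ) (lam : Fin m → ℝ) (P : Fin m → Matrix (Fin n) (Fin n) ℝ),
        (∀ i, 0 ≤ lam i ∧ lam i ≤ 1) ∧ (∑ i, lam i ≤ 1) ∧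
        (∀ i, IsPartialPermMatrix (P i)) ∧
        β = ∑ i, lam i • (P i).mulVec γ := by
  constructor
  · rintro ⟨D, hD, rfl⟩
    obtain ⟨w, hw0, hw1, rfl⟩ := hD.exists_eq_sum_submatrix_permMatrix
    let e := (Fintype.equivFin (Equiv.Perm (Fin n ⊕ Fin n))).symm
    refine ⟨_, w ∘ e, fun k => ((e k).permMatrix ℝ).submatrix Sum.inl Sum.inl,
      fun k => ⟨hw0 _, hw1 ▸ single_le_sum (fun σ _ => hw0 σ) (mem_univ _)⟩,
      by simp [e.sum_comp w, hw1],
      fun k => (e k).isPartialPermMatrix_permMatrix.submatrix Sum.inl_injective Sum.inl_injective,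
      ?_⟩
    simp only [sum_mulVec, smul_mulVec, Function.comp_apply]
    exact (e.sum_comp fun σ => w σ • _ *ᵥ γ).symm
  · rintro ⟨m, lam, P, hlam, hsum, hP, rfl⟩
    exact ⟨_, DoublySubstochastic.sum_smul (fun k => (hlam k).1) hsum
      fun k => (hP k).doublySubstochastic, by simp only [sum_mulVec, smul_mulVec]⟩

/-- For vectors `β, γ : Fin n → ℝ` with entries in `[0,1]`, there is a doubly
substochastic matrix `D` with `β = Dγ` iff `β = ∑ i, λ_i • (P_i γ)` for finitely
many coefficients `λ_i ∈ [0,1]` with `∑ λ_i ≤ 1` and partial permutation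
matrices `P_i`. -/
theorem exists_doublySubstochastic_iff_subconvex_partialPerms {n : ℕ} (β γ : Fin n → ℝ)
    (hβ : ∀ i, 0 ≤ β i ∧ β i ≤ 1) (hγ : ∀ i, 0 ≤ γ i ∧ γ i ≤ 1) :
    (∃ D : Matrix (Fin n) (Fin n) ℝ, DoublySubstochastic D ∧ D.mulVec γ = β) ↔
      ∃ (m : ℕ) (lam : Fin m → ℝ) (P : Fin m → Matrix (Fin n) (Fin n) ℝ),
        (∀ i, 0 ≤ lam i ∧ lam i ≤ 1) ∧ (∑ i, lam i ≤ 1) ∧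
        (∀ i, IsPartialPermMatrix (P i)) ∧
        β = ∑ i, lam i • (P i).mulVec γ :=
  exists_doublySubstochastic_iff_subconvex_partialPerms_general β γ
end

section
/- If M is an n×n doubly substochastic matrix, then the 2n×2n block matrix [[M, I − diag(M·1)], [I − diag(Mᵀ·1), Mᵀ]] is doubly stochastic, where 1 is the all-ones vector, diag(x) is the diagonal matrix with the entries of the vector x on its diagonal, and I is the n×n identity matrix. -/
/-- A square real matrix is doubly stochastic if all entries are nonnegative and
every row sum and every column sum equals 1. -/
def DoublyStochastic {m : Type*} [Fintype m] (D : Matrix m m ℝ) : Prop :=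
  (∀ i j, 0 ≤ D i j) ∧ (∀ i, ∑ j, D i j = 1) ∧ (∀ j, ∑ i, D i j = 1)

namespace Matrix

variable {m R : Type*} [DecidableEq m]

lemma one_sub_diagonal_nonneg [Ring R] [PartialOrder R] [IsOrderedRing R] {v : m → R}
    (hv : v ≤ 1) (i j : m) : 0 ≤ (1 - diagonal v) i j := by
  rcases eq_or_ne i j with rfl | hij
  · simpa using hv i
  · simp [hij]

variable [Fintype m]

section CommRing

variable [CommRing R]

def stochasticDilation (A : Matrix m m R) : Matrix (m ⊕ m) (m ⊕ m) R :=
  fromBlocks A (1 - diagonal (A *ᵥ 1)) (1 - diagonal (Aᵀ *ᵥ 1)) Aᵀ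

lemma diagonal_mulVec_one (v : m → R) : diagonal v *ᵥ 1 = v := by
  ext i
  simp [mulVec_diagonal]

lemma one_vecMul_diagonal (v : m → R) : 1 ᵥ* diagonal v = v := by
  ext i
  simp [vecMul_diagonal]

lemma stochasticDilation_mulVec_one (A : Matrix m m R) : stochasticDilation A *ᵥ 1 = 1 := by
  ext (i | i) <;> simp [stochasticDilation, fromBlocks_mulVec, sub_mulVec, diagonal_mulVec_one]

lemma one_vecMul_stochasticDilation (A : Matrix m m R) : 1 ᵥ* stochasticDilation A = 1 := by
  ext (i | i) <;>
    simp [stochasticDilation, vecMul_fromBlocks, vecMul_sub, one_vecMul_diagonal,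
      vecMul_transpose, mulVec_transpose]

end CommRing

lemma stochasticDilation_mem_doublyStochastic [CommRing R] [PartialOrder R] [IsOrderedRing R]
    {A : Matrix m m R} (hA : ∀ i j, 0 ≤ A i j) (hrow : A *ᵥ 1 ≤ 1) (hcol : Aᵀ *ᵥ 1 ≤ 1) :
    stochasticDilation A ∈ doublyStochastic R (m ⊕ m) := by
  refine ⟨?_, stochasticDilation_mulVec_one A, one_vecMul_stochasticDilation A⟩
  rintro (i | i) (j | j)
  exacts [hA i j, one_sub_diagonal_nonneg hrow i j, one_sub_diagonal_nonneg hcol i j, hA j i]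

end Matrix

open Matrix

variable {m : Type*} [Fintype m]

lemma doublyStochastic_iff_mem_doublyStochastic [DecidableEq m] {D : Matrix m m ℝ} :
    DoublyStochastic D ↔ D ∈ doublyStochastic ℝ m :=
  mem_doublyStochastic_iff_sum.symm

lemma DoublySubstochastic.mulVec_one_le {D : Matrix m m ℝ} (hD : DoublySubstochastic D) :
    D *ᵥ 1 ≤ 1 :=
  fun i => by simpa [mulVec, dotProduct] using hD.2.1 i

lemma DoublySubstochastic.transpose_mulVec_one_le {D : Matrix m m ℝ}
    (hD : DoublySubstochastic D) : Dᵀ *ᵥ 1 ≤ 1 :=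
  fun j => by simpa [mulVec, dotProduct] using hD.2.2 j

/-- If `M` is an `n×n` doubly substochastic matrix, then the `2n×2n` block matrix
`[[M, I − diag(M·1)], [I − diag(Mᵀ·1), Mᵀ]]` is doubly stochastic. -/
theorem fromBlocks_doublyStochastic_of_doublySubstochastic {n : ℕ}
    (M : Matrix (Fin n) (Fin n) ℝ) (hM : DoublySubstochastic M) :
    DoublyStochastic
      (Matrix.fromBlocks
        M (1 - Matrix.diagonal (M.mulVec (fun _ => 1)))
        (1 - Matrix.diagonal (M.transpose.mulVec (fun _ => 1))) M.transpose) :=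
  doublyStochastic_iff_mem_doublyStochastic.2 <|
    stochasticDilation_mem_doublyStochastic hM.1 hM.mulVec_one_le hM.transpose_mulVec_one_le
end

section
/- An n×n real matrix D is doubly substochastic if and only if it is a convex combination of n×n partial permutation matrices, i.e. D = ∑_{i=0}^{m−1} λ_i P_i for some λ_i ≥ 0 with ∑_i λ_i = 1 and partial permutation matrices P_i. -/
open Finset Matrix

private lemma block_isPartial {n : ℕ} (σ : Equiv.Perm (Fin n ⊕ Fin n)) :
    IsPartialPermMatrix (fun i j : Fin n =>
      if σ (Sum.inl i) = Sum.inl j then (1 : ℝ) else 0) := by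
  refine ⟨fun i j => by dsimp only; split <;> simp, fun i => ?_, fun j => ?_⟩
  · calc ∑ j, (if σ (Sum.inl i) = Sum.inl j then (1:ℝ) else 0)
        ≤ ∑ j : Fin n ⊕ Fin n, (if σ (Sum.inl i) = j then (1:ℝ) else 0) := by
          rw [Fintype.sum_sum_type]
          have : (0:ℝ) ≤ ∑ j : Fin n, (if σ (Sum.inl i) = Sum.inr j then (1:ℝ) else 0) :=
            Finset.sum_nonneg fun _ _ => by split <;> simp
          linarith
      _ = 1 := by simp
  · calc ∑ i, (if σ (Sum.inl i) = Sum.inl j then (1:ℝ) else 0)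
        = ∑ i, (if Sum.inl i = σ.symm (Sum.inl j) then (1:ℝ) else 0) := by
          refine Finset.sum_congr rfl fun i _ => ?_
          simp only [Equiv.apply_eq_iff_eq_symm_apply]
      _ ≤ ∑ i : Fin n ⊕ Fin n, (if i = σ.symm (Sum.inl j) then (1:ℝ) else 0) := by
          rw [Fintype.sum_sum_type]
          have : (0:ℝ) ≤ ∑ i : Fin n, (if Sum.inr i = σ.symm (Sum.inl j) then (1:ℝ) else 0) :=
            Finset.sum_nonneg fun _ _ => by split <;> simp
          linarith
      _ = 1 := by simp

/-- An `n×n` real matrix is doubly substochastic iff it is a convex combination of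
partial permutation matrices. -/
theorem doublySubstochastic_iff_convexComb_partialPerms {n : ℕ}
    (D : Matrix (Fin n) (Fin n) ℝ) :
    DoublySubstochastic D ↔
      ∃ (m : ℕ) (lam : Fin m → ℝ) (P : Fin m → Matrix (Fin n) (Fin n) ℝ),
        (∀ i, 0 ≤ lam i) ∧ (∑ i, lam i = 1) ∧
        (∀ i, IsPartialPermMatrix (P i)) ∧
        D = ∑ i, lam i • P i := by
  constructor
  · rintro ⟨hnn, hrow, hcol⟩
    -- build the 2n × 2n doubly stochastic extension
    set E : Matrix (Fin n ⊕ Fin n) (Fin n ⊕ Fin n) ℝ :=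
      Matrix.fromBlocks D (Matrix.diagonal fun i => 1 - ∑ k, D i k)
        (Matrix.diagonal fun j => 1 - ∑ k, D k j) Dᵀ with hE
    have hEmem : E ∈ doublyStochastic ℝ (Fin n ⊕ Fin n) := by
      rw [mem_doublyStochastic_iff_sum]
      refine ⟨?_, ?_, ?_⟩
      · rintro (i | i) (j | j) <;>
          simp only [hE, fromBlocks_apply₁₁, fromBlocks_apply₁₂, fromBlocks_apply₂₁,
            fromBlocks_apply₂₂, Matrix.diagonal_apply, Matrix.transpose_apply]
        · exact hnn i j
        · split
          · rename_i h; subst h; linarith [hrow i]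
          · exact le_refl 0
        · split
          · rename_i h; subst h; linarith [hcol i]
          · exact le_refl 0
        · exact hnn j i
      · rintro (i | i) <;> rw [Fintype.sum_sum_type] <;>
          simp only [hE, fromBlocks_apply₁₁, fromBlocks_apply₁₂, fromBlocks_apply₂₁,
            fromBlocks_apply₂₂, Matrix.diagonal_apply, Matrix.transpose_apply] <;>
          simp [Finset.sum_ite_eq, Finset.sum_ite_eq']
      · rintro (j | j) <;> rw [Fintype.sum_sum_type] <;>
          simp only [hE, fromBlocks_apply₁₁, fromBlocks_apply₁₂, fromBlocks_apply₂₁,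
            fromBlocks_apply₂₂, Matrix.diagonal_apply, Matrix.transpose_apply] <;>
          simp [Finset.sum_ite_eq, Finset.sum_ite_eq']
    obtain ⟨w, hw0, hw1, hwE⟩ := exists_eq_sum_perm_of_mem_doublyStochastic hEmem
    set m := Fintype.card (Equiv.Perm (Fin n ⊕ Fin n)) with hm
    set e : Fin m ≃ Equiv.Perm (Fin n ⊕ Fin n) := (Fintype.equivFin _).symm with he
    refine ⟨m, fun k => w (e k),
      fun k => fun i j => if (e k) (Sum.inl i) = Sum.inl j then 1 else 0,
      fun k => hw0 _, ?_, fun k => block_isPartial (e k), ?_⟩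
    · rw [Fintype.sum_equiv e _ w (fun k => rfl)]; exact hw1
    · funext i j
      rw [Matrix.sum_apply]
      simp only [Matrix.smul_apply, smul_eq_mul]
      have h2 : (∑ k : Fin m, w (e k) * if (e k) (Sum.inl i) = Sum.inl j then (1:ℝ) else 0)
          = ∑ σ : Equiv.Perm (Fin n ⊕ Fin n),
              w σ * if σ (Sum.inl i) = Sum.inl j then (1:ℝ) else 0 :=
        Equiv.sum_comp e (fun σ => w σ * if σ (Sum.inl i) = Sum.inl j then (1:ℝ) else 0)
      show D i j = ∑ k : Fin m, w (e k) * if (e k) (Sum.inl i) = Sum.inl j then (1:ℝ) else 0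
      rw [h2]
      have h1 := congrFun (congrFun hwE (Sum.inl i)) (Sum.inl j)
      simp only [Matrix.sum_apply, Matrix.smul_apply, Equiv.Perm.permMatrix,
        PEquiv.toMatrix_apply, Equiv.toPEquiv_apply, Option.mem_def,
        Option.some.injEq, smul_eq_mul] at h1
      rw [h1]
      simp [hE]
  · rintro ⟨m, lam, P, hlam0, hlam1, hP, rfl⟩
    refine ⟨fun i j => ?_, fun i => ?_, fun j => ?_⟩
    · rw [Matrix.sum_apply]
      exact Finset.sum_nonneg fun k _ => by
        rcases (hP k).1 i j with h | h <;> simp [Matrix.smul_apply, h, hlam0 k]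
    · calc ∑ j, (∑ k, lam k • P k) i j = ∑ k, lam k * ∑ j, P k i j := by
            simp only [Matrix.sum_apply, Matrix.smul_apply, smul_eq_mul]
            rw [Finset.sum_comm]
            simp [Finset.mul_sum]
        _ ≤ ∑ k, lam k := Finset.sum_le_sum fun k _ =>
            mul_le_of_le_one_right (hlam0 k) ((hP k).2.1 i)
        _ = 1 := hlam1
    · calc ∑ i, (∑ k, lam k • P k) i j = ∑ k, lam k * ∑ i, P k i j := by
            simp only [Matrix.sum_apply, Matrix.smul_apply, smul_eq_mul]
            rw [Finset.sum_comm]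
            simp [Finset.mul_sum]
        _ ≤ ∑ k, lam k := Finset.sum_le_sum fun k _ =>
            mul_le_of_le_one_right (hlam0 k) ((hP k).2.2 j)
        _ = 1 := hlam1
end

section
/- Let β_1, …, β_m : ℕ → [0,1] be finitely many nonincreasing sequences, each with finite support and total sum at most 1, and define μ(k) = min_i ∫β_i(k) − min_i ∫β_i(k−1), where ∫β_i(k) = ∑_{j=0}^{k} β_i(j) and ∫β_i(−1) = 0. Then μ is a source element of ℕ (values in [0,1], finite support, total sum at most 1), μ ≺ β_i for every i, and for every source element α of ℕ with α ≺ β_i for all i one has α ≺ μ; that is, μ is a greatest lower bound of {β_1,…,β_m} with respect to the majorization preorder. -/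
/-- A source element of `Y`: values in `[0,1]`, finite support, total weight at most 1. -/
def IsSourceElem {Y : Type*} (β : Y → ℝ) : Prop :=
  (∀ y, 0 ≤ β y ∧ β y ≤ 1) ∧ (Function.support β).Finite ∧ ∑ᶠ y, β y ≤ 1

/-- `α` is majorized by `β`: for every `k`, the sum of the `k` largest values of `α`
is at most the sum of the `k` largest values of `β`. -/
def Maj {Y : Type*} (α β : Y → ℝ) : Prop :=
  ∀ k : ℕ, sumKLargest α k ≤ sumKLargest β k

/-- The minimum over `i` of the partial sums `∫β_i(k) = ∑_{j=0}^{k} β_i(j)`. -/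
noncomputable def minIntegral {m : ℕ} (β : Fin m → ℕ → ℝ) (k : ℕ) : ℝ :=
  ⨅ i : Fin m, ∑ j ∈ Finset.range (k + 1), β i j

/-- `μ(k) = min_i ∫β_i(k) − min_i ∫β_i(k−1)`, with `∫β_i(−1) = 0`. -/
noncomputable def minMeet {m : ℕ} (β : Fin m → ℕ → ℝ) (k : ℕ) : ℝ :=
  if k = 0 then minIntegral β 0 else minIntegral β k - minIntegral β (k - 1)

lemma sum_le_sum_range_of_antitone (β : ℕ → ℝ) (h0 : ∀ n, 0 ≤ β n) (hm : Antitone β) :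
    ∀ k (S : Finset ℕ), S.card ≤ k → ∑ y ∈ S, β y ≤ ∑ j ∈ Finset.range k, β j := by
  intro k
  induction k with
  | zero =>
    intro S hS
    have : S = ∅ := Finset.card_eq_zero.mp (Nat.le_zero.mp hS)
    simp [this]
  | succ k ih =>
    intro S hS
    rcases Nat.lt_or_ge S.card (k + 1) with h | h
    · calc ∑ y ∈ S, β y ≤ ∑ j ∈ Finset.range k, β j := ih S (Nat.lt_succ_iff.mp h)
        _ ≤ ∑ j ∈ Finset.range (k + 1), β j := by
            rw [Finset.sum_range_succ]; linarith [h0 k]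
    · have hcard : S.card = k + 1 := le_antisymm hS h
      have hne : S.Nonempty := Finset.card_pos.mp (by omega)
      set M := S.max' hne with hM
      have hMmem : M ∈ S := S.max'_mem hne
      have hsub : S ⊆ Finset.range (M + 1) := fun x hx =>
        Finset.mem_range.mpr (Nat.lt_succ_of_le (S.le_max' x hx))
      have hMk : k ≤ M := by
        have := Finset.card_le_card hsub
        rw [Finset.card_range, hcard] at this; omega
      have herase : (S.erase M).card ≤ k := by
        rw [Finset.card_erase_of_mem hMmem, hcard]; omega
      calc ∑ y ∈ S, β y = ∑ y ∈ S.erase M, β y + β M :=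
            (Finset.sum_erase_add S _ hMmem).symm
        _ ≤ ∑ j ∈ Finset.range k, β j + β k := add_le_add (ih _ herase) (hm hMk)
        _ = ∑ j ∈ Finset.range (k + 1), β j := (Finset.sum_range_succ _ _).symm

lemma sumKLargest_eq_of_antitone (β : ℕ → ℝ) (h0 : ∀ n, 0 ≤ β n) (hm : Antitone β) (k : ℕ) :
    sumKLargest β k = ∑ j ∈ Finset.range k, β j := by
  apply le_antisymm
  · refine csSup_le ⟨0, ∅, by simp⟩ ?_
    rintro s ⟨S, hS, rfl⟩
    exact sum_le_sum_range_of_antitone β h0 hm k S hS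
  · apply le_csSup
    · exact ⟨∑ j ∈ Finset.range k, β j, by
        rintro s ⟨S, hS, rfl⟩
        exact sum_le_sum_range_of_antitone β h0 hm k S hS⟩
    · exact ⟨Finset.range k, by simp⟩

lemma sumKLargest_zero {Y : Type*} (α : Y → ℝ) : sumKLargest α 0 = 0 := by
  apply le_antisymm
  · refine csSup_le ⟨0, ∅, by simp⟩ ?_
    rintro s ⟨S, hS, rfl⟩
    have : S = ∅ := Finset.card_eq_zero.mp (Nat.le_zero.mp hS)
    simp [this]
  · apply le_csSup
    · exact ⟨0, by
        rintro s ⟨S, hS, rfl⟩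
        have : S = ∅ := Finset.card_eq_zero.mp (Nat.le_zero.mp hS)
        simp [this]⟩
    · exact ⟨∅, by simp⟩


/-- For finitely many nonincreasing source elements `β_1, …, β_m` of `ℕ`, the sequence
`μ(k) = min_i ∫β_i(k) − min_i ∫β_i(k−1)` is a source element of `ℕ`, it is majorized by
every `β_i`, and every source element majorized by all `β_i` is majorized by `μ`:
`μ` is a greatest lower bound of `{β_1,…,β_m}` for the majorization preorder. -/
theorem minMeet_is_majorization_glb {m : ℕ} (hm : 0 < m) (β : Fin m → ℕ → ℝ)
    (hmono : ∀ i, Antitone (β i))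
    (hrange : ∀ i k, 0 ≤ β i k ∧ β i k ≤ 1)
    (hsupp : ∀ i, (Function.support (β i)).Finite)
    (hsum : ∀ i, ∑ᶠ k, β i k ≤ 1) :
    IsSourceElem (minMeet β) ∧
    (∀ i, Maj (minMeet β) (β i)) ∧
    (∀ α : ℕ → ℝ, IsSourceElem α → (∀ i, Maj α (β i)) → Maj α (minMeet β)) := by
  haveI : Nonempty (Fin m) := ⟨⟨0, hm⟩⟩
  set G : Fin m → ℕ → ℝ := fun i k => ∑ j ∈ Finset.range (k + 1), β i j with hGdef
  have hFle : ∀ k i, minIntegral β k ≤ G i k := fun k i =>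
    ciInf_le (Set.Finite.bddBelow (Set.finite_range _)) i
  have hFge : ∀ k (c : ℝ), (∀ i, c ≤ G i k) → c ≤ minIntegral β k := fun k c h => le_ciInf h
  have hGmono : ∀ i, Monotone (G i) := by
    intro i
    apply monotone_nat_of_le_succ
    intro k
    simp only [hGdef]
    rw [Finset.sum_range_succ (n := k + 1)]
    linarith [(hrange i (k + 1)).1]
  have hFmono : Monotone (minIntegral β) := by
    apply monotone_nat_of_le_succ
    intro k
    exact hFge _ _ fun i => (hFle k i).trans (hGmono i (Nat.le_succ k))
  have hF0 : 0 ≤ minIntegral β 0 := hFge _ _ fun i => by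
    show (0 : ℝ) ≤ ∑ j ∈ Finset.range (0 + 1), β i j
    simpa using (hrange i 0).1
  -- μ values
  have hμ0 : minMeet β 0 = minIntegral β 0 := by simp [minMeet]
  have hμsucc : ∀ k, minMeet β (k + 1) = minIntegral β (k + 1) - minIntegral β k := by
    intro k; simp [minMeet]
  have hμnonneg : ∀ k, 0 ≤ minMeet β k := by
    intro k
    cases k with
    | zero => rw [hμ0]; exact hF0
    | succ k => rw [hμsucc]; linarith [hFmono (Nat.le_succ k)]
  -- antitone
  have hμanti : Antitone (minMeet β) := by
    apply antitone_nat_of_succ_le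
    intro k
    cases k with
    | zero =>
      rw [hμ0, hμsucc]
      have h2 : minIntegral β 1 / 2 ≤ minIntegral β 0 := hFge _ _ fun i => by
        have h1 : minIntegral β 1 ≤ ∑ j ∈ Finset.range (1 + 1), β i j := hFle 1 i
        have e1 : ∑ j ∈ Finset.range (1 + 1), β i j = β i 0 + β i 1 := by
          rw [Finset.sum_range_succ, Finset.sum_range_one]
        have e0 : ∑ j ∈ Finset.range (0 + 1), β i j = β i 0 := by simp
        have hb : β i 1 ≤ β i 0 := hmono i (Nat.le_succ 0)
        show minIntegral β 1 / 2 ≤ ∑ j ∈ Finset.range (0 + 1), β i j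
        linarith
      linarith
    | succ k =>
      rw [hμsucc, hμsucc]
      have h2 : (minIntegral β (k + 2) + minIntegral β k) / 2 ≤ minIntegral β (k + 1) := by
        apply hFge
        intro i
        have ha : minIntegral β (k + 2) ≤ G i (k + 2) := hFle _ i
        have hb : minIntegral β k ≤ G i k := hFle _ i
        have hstep : G i (k + 2) + G i k ≤ 2 * G i (k + 1) := by
          have e1 : G i (k + 2) = G i (k + 1) + β i (k + 2) := by
            simp [hGdef, Finset.sum_range_succ (n := k + 2)]
          have e2 : G i (k + 1) = G i k + β i (k + 1) := by
            simp [hGdef, Finset.sum_range_succ (n := k + 1)]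
          have hbb : β i (k + 2) ≤ β i (k + 1) := hmono i (Nat.le_succ _)
          linarith
        linarith
      linarith
  -- partial sums of μ
  have hpsum : ∀ k, ∑ j ∈ Finset.range (k + 1), minMeet β j = minIntegral β k := by
    intro k
    induction k with
    | zero => simp [Finset.sum_range_one, hμ0]
    | succ k ih =>
      rw [Finset.sum_range_succ, ih, hμsucc]
      ring
  -- a uniform support bound
  obtain ⟨N, hN⟩ : ∃ N, ∀ i k, N ≤ k → β i k = 0 := by
    refine ⟨(Finset.univ.biUnion fun i => (hsupp i).toFinset).sup id + 1, ?_⟩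
    intro i k hk
    by_contra hne
    have hkmem : k ∈ (Finset.univ.biUnion fun i => (hsupp i).toFinset) := by
      simp only [Finset.mem_biUnion]
      exact ⟨i, Finset.mem_univ i, by simp [Set.Finite.mem_toFinset, Function.mem_support, hne]⟩
    have := Finset.le_sup (f := id) hkmem
    simp only [id_eq] at this
    omega
  have hGconst : ∀ i k, N ≤ k → G i k = G i N := by
    intro i k hk
    simp only [hGdef]
    symm
    apply Finset.sum_subset
    · exact Finset.range_subset_range.mpr (by omega)
    · intro x _ hx
      simp only [Finset.mem_range] at hx
      exact hN i x (by omega)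
  have hFconst : ∀ k, N ≤ k → minIntegral β k = minIntegral β N := by
    intro k hk
    apply le_antisymm
    · exact hFge _ _ fun i => (hFle k i).trans_eq (hGconst i k hk)
    · exact hFmono hk
  have hμzero : ∀ k, N + 1 ≤ k → minMeet β k = 0 := by
    intro k hk
    obtain ⟨j, rfl⟩ : ∃ j, k = j + 1 := ⟨k - 1, by omega⟩
    rw [hμsucc, hFconst (j + 1) (by omega), hFconst j (by omega)]
    ring
  have hμsupp : (Function.support (minMeet β)).Finite := by
    apply Set.Finite.subset (Finset.range (N + 1) : Finset ℕ).finite_toSet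
    intro k hk
    simp only [Finset.coe_range, Set.mem_Iio]
    by_contra h
    exact hk (hμzero k (by omega))
  -- total sum
  have hμfinsum : ∑ᶠ k, minMeet β k = minIntegral β N := by
    rw [finsum_eq_sum_of_support_subset (minMeet β) (s := Finset.range (N + 1))]
    · exact hpsum N
    · intro k hk
      simp only [Finset.coe_range, Set.mem_Iio]
      by_contra h
      exact hk (hμzero k (by omega))
  have hβfinsum : ∀ i, ∑ i_1 ∈ Finset.range (N + 1), β i i_1 = ∑ᶠ k, β i k := by
    intro i
    rw [finsum_eq_sum_of_support_subset (β i) (s := Finset.range (N + 1))]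
    intro k hk
    simp only [Finset.coe_range, Set.mem_Iio]
    by_contra h
    exact hk (hN i k (by omega))
  have hμsum : ∑ᶠ k, minMeet β k ≤ 1 := by
    rw [hμfinsum]
    calc minIntegral β N ≤ G ⟨0, hm⟩ N := hFle N _
      _ = ∑ᶠ k, β ⟨0, hm⟩ k := hβfinsum _
      _ ≤ 1 := hsum _
  -- range of μ
  have hμrange : ∀ k, 0 ≤ minMeet β k ∧ minMeet β k ≤ 1 := by
    intro k
    refine ⟨hμnonneg k, ?_⟩
    calc minMeet β k ≤ minMeet β 0 := hμanti (Nat.zero_le k)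
      _ = minIntegral β 0 := hμ0
      _ ≤ G ⟨0, hm⟩ 0 := hFle 0 _
      _ = β ⟨0, hm⟩ 0 := by simp [hGdef, Finset.sum_range_one]
      _ ≤ 1 := (hrange _ 0).2
  refine ⟨⟨hμrange, hμsupp, hμsum⟩, ?_, ?_⟩
  · intro i k
    rw [sumKLargest_eq_of_antitone _ hμnonneg hμanti,
      sumKLargest_eq_of_antitone _ (fun n => (hrange i n).1) (hmono i)]
    cases k with
    | zero => simp
    | succ k =>
      rw [hpsum k]
      exact hFle k i
  · intro α hα hmaj k
    cases k with
    | zero => rw [sumKLargest_zero, sumKLargest_zero]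
    | succ k =>
      rw [sumKLargest_eq_of_antitone _ hμnonneg hμanti, hpsum k]
      apply hFge
      intro i
      calc sumKLargest α (k + 1) ≤ sumKLargest (β i) (k + 1) := hmaj i (k + 1)
        _ = ∑ j ∈ Finset.range (k + 1), β i j :=
            sumKLargest_eq_of_antitone _ (fun n => (hrange i n).1) (hmono i) _
        _ = G i k := rfl
end

section
/- Let B be a finite set of source elements of a set Y and let u, v ∈ Y with B_u ∩ B_v = ∅. Then either δ(x) ≤ δ(y) for all δ ∈ B, all x ∈ B_u and all y ∈ B_v, or δ(y) ≤ δ(x) for all δ ∈ B, all x ∈ B_u and all y ∈ B_v; in particular there cannot exist δ, γ ∈ B and x, x' ∈ B_u, y, y' ∈ B_v with δ(x) < δ(y) and γ(y') < γ(x'). -/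
/-- The strict preference step of `B`: `u ⊲_δ v` (i.e. `δ u < δ v`) for some `δ ∈ B`. -/
def LtRel {Y : Type*} (B : Set (Y → ℝ)) (u v : Y) : Prop :=
  ∃ δ ∈ B, δ u < δ v

/-- The consistency class of `B` at `y`: `{y}` together with all `u` lying in a common
`⊲`-cycle with `y` in `B`. -/
def consClass {Y : Type*} (B : Set (Y → ℝ)) (y : Y) : Set Y :=
  {y} ∪ {u | Relation.TransGen (LtRel B) u y ∧ Relation.TransGen (LtRel B) y u}

/-!
A strict comparison `δ x < δ y` with `x ∈ B_u`, `y ∈ B_v` gives a `⊲`-path from `u` to `v`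
(through `x` and `y`). Opposite strict comparisons would therefore close a `⊲`-cycle through
`u` and `v`, putting `v` into `B_u ∩ B_v`. The dichotomy follows: if neither alternative
held, the two failures would be exactly such opposite comparisons.
-/

namespace consClass

variable {Y : Type*} {B : Set (Y → ℝ)}

theorem reflTransGen_of_mem {a b : Y} (h : a ∈ consClass B b) :
    Relation.ReflTransGen (LtRel B) b a ∧ Relation.ReflTransGen (LtRel B) a b := by
  rcases h with rfl | ⟨hab, hba⟩
  · exact ⟨.refl, .refl⟩
  · exact ⟨hba.to_reflTransGen, hab.to_reflTransGen⟩

theorem transGen_of_lt {u v x y : Y} {δ : Y → ℝ} (hδ : δ ∈ B)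
    (hx : x ∈ consClass B u) (hy : y ∈ consClass B v) (hlt : δ x < δ y) :
    Relation.TransGen (LtRel B) u v :=
  Relation.TransGen.trans_right (reflTransGen_of_mem hx).1 <|
    (Relation.TransGen.single ⟨δ, hδ, hlt⟩).trans_left (reflTransGen_of_mem hy).2

theorem not_lt_and_lt_of_disjoint {u v : Y} (hdisj : consClass B u ∩ consClass B v = ∅) :
    ¬ ∃ δ ∈ B, ∃ γ ∈ B, ∃ x ∈ consClass B u, ∃ x' ∈ consClass B u,
        ∃ y ∈ consClass B v, ∃ y' ∈ consClass B v, δ x < δ y ∧ γ y' < γ x' := by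
  rintro ⟨δ, hδ, γ, hγ, x, hx, x', hx', y, hy, y', hy', hxy, hyx⟩
  have hv : v ∈ consClass B u ∩ consClass B v :=
    ⟨Or.inr ⟨transGen_of_lt hγ hy' hx' hyx, transGen_of_lt hδ hx hy hxy⟩, Or.inl rfl⟩
  simp [hdisj] at hv

end consClass

theorem consClass_disjoint_ordered_general {Y : Type*} (B : Set (Y → ℝ))
    (u v : Y) (hdisj : consClass B u ∩ consClass B v = ∅) :
    ((∀ δ ∈ B, ∀ x ∈ consClass B u, ∀ y ∈ consClass B v, δ x ≤ δ y) ∨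
     (∀ δ ∈ B, ∀ x ∈ consClass B u, ∀ y ∈ consClass B v, δ y ≤ δ x)) ∧
    ¬ ∃ δ ∈ B, ∃ γ ∈ B, ∃ x ∈ consClass B u, ∃ x' ∈ consClass B u,
        ∃ y ∈ consClass B v, ∃ y' ∈ consClass B v, δ x < δ y ∧ γ y' < γ x' := by
  have hno := consClass.not_lt_and_lt_of_disjoint hdisj
  refine ⟨?_, hno⟩
  by_contra! h
  obtain ⟨⟨δ, hδ, x, hx, y, hy, hyx⟩, ⟨γ, hγ, x', hx', y', hy', hxy⟩⟩ := h
  exact hno ⟨γ, hγ, δ, hδ, x', hx', x, hx, y', hy', y, hy, hxy, hyx⟩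

/-- If the consistency classes `B_u` and `B_v` are disjoint, then either every `δ ∈ B`
puts all of `B_u` at most as high as all of `B_v`, or vice versa; in particular there
cannot be `δ, γ ∈ B` and points of `B_u`, `B_v` compared strictly in opposite ways. -/
theorem consClass_disjoint_ordered {Y : Type*} (B : Set (Y → ℝ))
    (hfin : B.Finite) (hsrc : ∀ β ∈ B, IsSourceElem β)
    (u v : Y) (hdisj : consClass B u ∩ consClass B v = ∅) :
    ((∀ δ ∈ B, ∀ x ∈ consClass B u, ∀ y ∈ consClass B v, δ x ≤ δ y) ∨
     (∀ δ ∈ B, ∀ x ∈ consClass B u, ∀ y ∈ consClass B v, δ y ≤ δ x)) ∧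
    ¬ ∃ δ ∈ B, ∃ γ ∈ B, ∃ x ∈ consClass B u, ∃ x' ∈ consClass B u,
        ∃ y ∈ consClass B v, ∃ y' ∈ consClass B v, δ x < δ y ∧ γ y' < γ x' :=
  consClass_disjoint_ordered_general B u v hdisj
end

section
/- Let B be a finite set of source elements of a set Y, and let α be a source element of Y that is consistent with every element of B. Then α is constant on every consistency class of B: for all y ∈ Y and all u, v ∈ B_y, α(u) = α(v). -/
/-- `α` is consistent with `δ`: strict preferences of either never contradict
the (weak) preferences of the other. -/
def ConsistentWith {Y : Type*} (α δ : Y → ℝ) : Prop :=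
  ∀ u v : Y, (α u < α v → δ u ≤ δ v) ∧ (δ u < δ v → α u ≤ α v)

section

variable {Y : Type*} {B : Set (Y → ℝ)} {α : Y → ℝ}

theorem ConsistentWith.le_of_lt {δ : Y → ℝ} (h : ConsistentWith α δ) {u v : Y}
    (hlt : δ u < δ v) : α u ≤ α v :=
  (h u v).2 hlt

theorem le_of_transGen_ltRel (hcons : ∀ δ ∈ B, ConsistentWith α δ) {u v : Y}
    (huv : Relation.TransGen (LtRel B) u v) : α u ≤ α v := by
  have hstep : ∀ a b, LtRel B a b → α a ≤ α b := fun _ _ ⟨δ, hδ, hlt⟩ =>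
    (hcons δ hδ).le_of_lt hlt
  simpa only [Relation.transGen_eq_self] using huv.lift (p := (· ≤ ·)) α hstep

theorem eq_of_mem_consClass (hcons : ∀ δ ∈ B, ConsistentWith α δ) {y u : Y}
    (hu : u ∈ consClass B y) : α u = α y := by
  rcases hu with rfl | ⟨huy, hyu⟩
  · rfl
  · exact le_antisymm (le_of_transGen_ltRel hcons huy) (le_of_transGen_ltRel hcons hyu)

end

theorem consistentWith_constant_on_consClass_general {Y : Type*} (B : Set (Y → ℝ))
    (α : Y → ℝ) (hcons : ∀ δ ∈ B, ConsistentWith α δ) :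
    ∀ y : Y, ∀ u ∈ consClass B y, ∀ v ∈ consClass B y, α u = α v := by
  intro y u hu v hv
  rw [eq_of_mem_consClass hcons hu, eq_of_mem_consClass hcons hv]

/-- A source element consistent with every element of a finite set `B` of source
elements is constant on every consistency class of `B`. -/
theorem consistentWith_constant_on_consClass {Y : Type*} (B : Set (Y → ℝ))
    (hfin : B.Finite) (hsrc : ∀ β ∈ B, IsSourceElem β)
    (α : Y → ℝ) (hα : IsSourceElem α) (hcons : ∀ δ ∈ B, ConsistentWith α δ) :
    ∀ y : Y, ∀ u ∈ consClass B y, ∀ v ∈ consClass B y, α u = α v :=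
  consistentWith_constant_on_consClass_general B α hcons
end

section
/- Let B be a finite set of source elements of a set Y and β ∈ B. Define β̂ : Y → ℝ by β̂(y) = min{β(u) | u ∈ B_y} (the minimum exists since β takes only finitely many values). Then β̂ is a source element of Y with β̂(y) ≤ β(y) for all y ∈ Y (hence β̂ ≺ β), and β̂ is consistent with every element of B. -/
/-- `β̂(y) = min {β(u) | u ∈ B_y}` (as an infimum; the minimum is attained since
`β` takes only finitely many values). -/
noncomputable def hatOf {Y : Type*} (B : Set (Y → ℝ)) (β : Y → ℝ) : Y → ℝ :=
  fun y => sInf (β '' consClass B y)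

/-- For `β` in a finite set `B` of source elements, `β̂(y) = min {β(u) | u ∈ B_y}`
is a source element with `β̂ ≤ β` pointwise (hence `β̂ ≺ β`), and `β̂` is consistent
with every element of `B`. -/
theorem hatOf_isSource_le_consistent {Y : Type*} (B : Set (Y → ℝ))
    (hfin : B.Finite) (hsrc : ∀ β ∈ B, IsSourceElem β)
    (β : Y → ℝ) (hβ : β ∈ B) :
    IsSourceElem (hatOf B β) ∧
    (∀ y : Y, hatOf B β y ≤ β y) ∧
    Maj (hatOf B β) β ∧
    (∀ δ ∈ B, ConsistentWith (hatOf B β) δ) := by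
  classical
  obtain ⟨hβ01, hβsupp, hβsum⟩ := hsrc β hβ
  have hβ0 : ∀ y, 0 ≤ β y := fun y => (hβ01 y).1
  have hmem : ∀ y : Y, β y ∈ β '' consClass B y := fun y => ⟨y, Or.inl rfl, rfl⟩
  have hne : ∀ y : Y, (β '' consClass B y).Nonempty := fun y => ⟨_, hmem y⟩
  have hbdd : ∀ y : Y, BddBelow (β '' consClass B y) := by
    intro y
    refine ⟨0, ?_⟩
    rintro x ⟨u, -, rfl⟩
    exact hβ0 u
  have hle : ∀ y, hatOf B β y ≤ β y := fun y => csInf_le (hbdd y) (hmem y)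
  have h0 : ∀ y, 0 ≤ hatOf B β y := by
    intro y
    apply le_csInf (hne y)
    rintro x ⟨u, -, rfl⟩
    exact hβ0 u
  -- Claim A
  have claimA : ∀ δ ∈ B, ∀ u v : Y, δ u < δ v → hatOf B β u ≤ hatOf B β v := by
    intro δ hδ u v huv
    apply le_csInf (hne v)
    rintro x ⟨w, hw, rfl⟩
    by_cases hc : β u ≤ β w
    · exact (hle u).trans hc
    · push_neg at hc
      have hwu : Relation.TransGen (LtRel B) w u := Relation.TransGen.single ⟨β, hβ, hc⟩
      have huw : Relation.TransGen (LtRel B) u w := by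
        rcases hw with hw | ⟨hwv, hvw⟩
        · rw [Set.mem_singleton_iff] at hw
          subst hw
          exact Relation.TransGen.single ⟨δ, hδ, huv⟩
        · exact Relation.TransGen.head ⟨δ, hδ, huv⟩ hvw
      exact csInf_le (hbdd u) ⟨w, Or.inr ⟨hwu, huw⟩, rfl⟩
  -- support of hat is contained in support of β
  have hsub : Function.support (hatOf B β) ⊆ Function.support β := by
    intro y hy
    have : 0 < hatOf B β y := lt_of_le_of_ne (h0 y) (Ne.symm hy)
    exact ne_of_gt (lt_of_lt_of_le this (hle y))
  have hfinhat : (Function.support (hatOf B β)).Finite := hβsupp.subset hsub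
  -- sums over finsets of β are bounded by 1
  have hsumS : ∀ S : Finset Y, ∑ y ∈ S, β y ≤ 1 := by
    intro S
    have h1 : ∑ y ∈ S, β y = ∑ y ∈ S ∩ hβsupp.toFinset, β y := by
      refine (Finset.sum_subset (Finset.inter_subset_left) ?_).symm
      intro x hx hx'
      by_contra hx0
      exact hx' (Finset.mem_inter.2 ⟨hx, hβsupp.mem_toFinset.2 hx0⟩)
    have h2 : ∑ y ∈ S ∩ hβsupp.toFinset, β y ≤ ∑ y ∈ hβsupp.toFinset, β y :=
      Finset.sum_le_sum_of_subset_of_nonneg (Finset.inter_subset_right)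
        (fun y _ _ => hβ0 y)
    have h3 : ∑ y ∈ hβsupp.toFinset, β y = ∑ᶠ y, β y := (finsum_eq_sum β hβsupp).symm
    calc ∑ y ∈ S, β y = ∑ y ∈ S ∩ hβsupp.toFinset, β y := h1
      _ ≤ ∑ y ∈ hβsupp.toFinset, β y := h2
      _ = ∑ᶠ y, β y := h3
      _ ≤ 1 := hβsum
  refine ⟨⟨fun y => ⟨h0 y, (hle y).trans (hβ01 y).2⟩, hfinhat, ?_⟩, hle, ?_, ?_⟩
  · -- total mass of hat
    have heq : ∑ᶠ y, hatOf B β y = ∑ y ∈ hβsupp.toFinset, hatOf B β y :=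
      finsum_eq_finset_sum_of_support_subset _ (by
        intro y hy
        exact hβsupp.mem_toFinset.2 (hsub hy))
    rw [heq]
    calc ∑ y ∈ hβsupp.toFinset, hatOf B β y ≤ ∑ y ∈ hβsupp.toFinset, β y :=
          Finset.sum_le_sum (fun y _ => hle y)
      _ ≤ 1 := by rw [finsum_eq_sum β hβsupp] at hβsum; exact hβsum
  · -- Maj
    intro k
    have hbddR : BddAbove {s : ℝ | ∃ S : Finset Y, S.card ≤ k ∧ s = ∑ y ∈ S, β y} := by
      refine ⟨1, ?_⟩
      rintro s ⟨S, -, rfl⟩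
      exact hsumS S
    refine csSup_le ⟨0, ∅, by simp, by simp⟩ ?_
    rintro s ⟨S, hS, rfl⟩
    calc ∑ y ∈ S, hatOf B β y ≤ ∑ y ∈ S, β y := Finset.sum_le_sum (fun y _ => hle y)
      _ ≤ sSup {s : ℝ | ∃ S : Finset Y, S.card ≤ k ∧ s = ∑ y ∈ S, β y} :=
          le_csSup hbddR ⟨S, hS, rfl⟩
  · -- consistency
    intro δ hδ u v
    constructor
    · intro h
      by_contra hlt
      push_neg at hlt
      exact absurd (claimA δ hδ v u hlt) (not_le.2 h)
    · exact claimA δ hδ u v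
end

section
/- Let B be a finite set of source elements of a set Y, and for each β ∈ B define β̂(y) = min{β(u) | u ∈ B_y}. Then the set B̂ = {β̂ | β ∈ B} is consistent: whenever β̂(u) < β̂(v) for some β ∈ B, then δ̂(u) ≤ δ̂(v) for all δ ∈ B. -/
/-!
If `β̂ u < β̂ v` but `δ̂ v < δ̂ u`, pick `w ∈ B_v` with `δ w < δ̂ u` and `z ∈ B_u` with
`β z < β̂ v ≤ β w`. Then `u ⊲⁺ z ⊲_β w` and `w ⊲_δ u`, so `w` lies on a cycle through `u`,
i.e. `w ∈ B_u`, and hence `δ̂ u ≤ δ w`, a contradiction.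
-/

section

variable {Y : Type*} {B : Set (Y → ℝ)}

theorem IsSourceElem.bddBelow_range {β : Y → ℝ} (hβ : IsSourceElem β) :
    BddBelow (Set.range β) :=
  ⟨0, by rintro _ ⟨y, rfl⟩; exact (hβ.1 y).1⟩

theorem self_mem_consClass (y : Y) : y ∈ consClass B y :=
  Or.inl rfl

theorem hatOf_le_of_mem {β : Y → ℝ} (hβ : BddBelow (Set.range β)) {y w : Y}
    (hw : w ∈ consClass B y) : hatOf B β y ≤ β w :=
  csInf_le (hβ.mono (Set.image_subset_range β _)) (Set.mem_image_of_mem β hw)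

theorem exists_lt_of_hatOf_lt {β : Y → ℝ} {y : Y} {c : ℝ} (h : hatOf B β y < c) :
    ∃ z ∈ consClass B y, β z < c := by
  obtain ⟨_, ⟨z, hz, rfl⟩, hzc⟩ :=
    exists_lt_of_csInf_lt ⟨β y, Set.mem_image_of_mem β (self_mem_consClass y)⟩ h
  exact ⟨z, hz, hzc⟩

theorem transGen_of_mem_consClass_of_lt {β : Y → ℝ} (hβ : β ∈ B) {u z w : Y}
    (hz : z ∈ consClass B u) (hzw : β z < β w) : Relation.TransGen (LtRel B) u w := by
  rcases hz with rfl | ⟨-, huz⟩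
  · exact .single ⟨β, hβ, hzw⟩
  · exact huz.tail ⟨β, hβ, hzw⟩

theorem mem_consClass_of_lt_of_lt {β δ : Y → ℝ} (hβ : β ∈ B) (hδ : δ ∈ B) {u z w : Y}
    (hz : z ∈ consClass B u) (hzw : β z < β w) (hwu : δ w < δ u) : w ∈ consClass B u :=
  Or.inr ⟨.single ⟨δ, hδ, hwu⟩, transGen_of_mem_consClass_of_lt hβ hz hzw⟩

end

theorem hatSet_consistent_general {Y : Type*} (B : Set (Y → ℝ))
    (hsrc : ∀ β ∈ B, IsSourceElem β) :
    ∀ β ∈ B, ∀ δ ∈ B, ∀ u v : Y,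
      hatOf B β u < hatOf B β v → hatOf B δ u ≤ hatOf B δ v := by
  intro β hβ δ hδ u v hβuv
  by_contra! hδvu
  have hβbdd := (hsrc β hβ).bddBelow_range
  have hδbdd := (hsrc δ hδ).bddBelow_range
  obtain ⟨w, hwv, hδw⟩ := exists_lt_of_hatOf_lt hδvu
  obtain ⟨z, hzu, hβz⟩ := exists_lt_of_hatOf_lt hβuv
  have hzw : β z < β w := hβz.trans_le (hatOf_le_of_mem hβbdd hwv)
  have hwu : δ w < δ u := hδw.trans_le (hatOf_le_of_mem hδbdd (self_mem_consClass u))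
  have hwu_mem : w ∈ consClass B u := mem_consClass_of_lt_of_lt hβ hδ hzu hzw hwu
  exact (hatOf_le_of_mem hδbdd hwu_mem).not_gt hδw

/-- The set `B̂ = {β̂ | β ∈ B}` is consistent: whenever `β̂(u) < β̂(v)` for some
`β ∈ B`, then `δ̂(u) ≤ δ̂(v)` for all `δ ∈ B`. -/
theorem hatSet_consistent {Y : Type*} (B : Set (Y → ℝ))
    (hfin : B.Finite) (hsrc : ∀ β ∈ B, IsSourceElem β) :
    ∀ β ∈ B, ∀ δ ∈ B, ∀ u v : Y,
      hatOf B β u < hatOf B β v → hatOf B δ u ≤ hatOf B δ v :=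
  hatSet_consistent_general B hsrc
end
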